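/- arXiv:2605.23606 — 9 statements merged into one kernel-verified Lean document; each statement's English description precedes it below -/
import Mathlib

section
/- Let E be a normed space, let F be a quasi-complete Hausdorff locally convex space, and let 𝔓 be a cone property of bounded subsets of E. Then the set M := {T ∈ L(E,F) : T(C) is relatively compact in F whenever C is a bounded subset of E having 𝔓} is a closed linear subspace of L(E,F) endowed with the topology of uniform convergence on bounded sets. -/
/-!
Relative compactness of `T '' C` is preserved by sums and scalar multiples because addition and
scalar multiplication are continuous. For closedness, quasi-completeness turns "relatively
compact" into "totally bounded", and total boundedness of `T '' C` passes to limits in the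
topology of uniform convergence on bounded sets: if `S` is uniformly `U`-close to `T` on `C`, a
finite `U`-net of `S '' C` is a finite `U + U`-net of `T '' C`.
-/

open Filter Topology Bornology Pointwise

section TotallyBounded

variable {α : Type*} [UniformSpace α] [AddGroup α] [IsUniformAddGroup α]

theorem totallyBounded_of_forall_nhds_zero_subset_add {s : Set α}
    (h : ∀ U ∈ 𝓝 (0 : α), ∃ t, TotallyBounded t ∧ s ⊆ t + U) : TotallyBounded s := by
  rw [totallyBounded_iff_subset_finite_iUnion_nhds_zero]
  intro U hU
  obtain ⟨V, hV, hVU⟩ := exists_nhds_zero_half hU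
  obtain ⟨t, ht, hst⟩ := h V hV
  obtain ⟨net, hnet, htnet⟩ := totallyBounded_iff_subset_finite_iUnion_nhds_zero.mp ht V hV
  refine ⟨net, hnet, fun x hx => ?_⟩
  obtain ⟨y, hy, v, hv, rfl⟩ := hst hx
  obtain ⟨z, hz, w, hw, rfl⟩ := Set.mem_iUnion₂.mp (htnet hy)
  refine Set.mem_iUnion₂.mpr ⟨z, hz, w + v, hVU w hw v hv, ?_⟩
  simp only [vadd_eq_add, add_assoc]

end TotallyBounded

theorem isCompact_closure_iff_totallyBounded (𝕜 : Type*) {F : Type*} [NormedField 𝕜]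
    [AddCommGroup F] [Module 𝕜 F] [UniformSpace F] [IsUniformAddGroup F] [ContinuousSMul 𝕜 F]
    [QuasiCompleteSpace 𝕜 F] {s : Set F} : IsCompact (closure s) ↔ TotallyBounded s :=
  ⟨fun h => h.totallyBounded.subset subset_closure,
    isCompact_closure_of_totallyBounded_quasiComplete (𝕜 := 𝕜)⟩

theorem ContinuousLinearMap.isClosed_setOf_totallyBounded_image {𝕜₁ 𝕜₂ : Type*}
    [NormedField 𝕜₁] [NormedField 𝕜₂] {σ : 𝕜₁ →+* 𝕜₂} {E F : Type*} [AddCommGroup E]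
    [Module 𝕜₁ E] [TopologicalSpace E] [AddCommGroup F] [Module 𝕜₂ F] [UniformSpace F]
    [IsUniformAddGroup F] {C : Set E} (hC : IsVonNBounded 𝕜₁ C) :
    IsClosed {T : E →SL[σ] F | TotallyBounded (T '' C)} := by
  refine isClosed_of_closure_subset fun T hT => ?_
  refine totallyBounded_of_forall_nhds_zero_subset_add fun U hU => ?_
  obtain ⟨S, hS, hST⟩ := mem_closure_iff_nhds_zero.mp hT _
    (ContinuousLinearMap.hasBasis_nhds_zero.mem_of_mem (i := (C, -U))
      ⟨hC, neg_mem_nhds_zero F hU⟩)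
  refine ⟨S '' C, hS, ?_⟩
  rintro _ ⟨x, hx, rfl⟩
  have hTS : T x - S x ∈ U := by simpa using hST x hx
  exact ⟨S x, ⟨x, hx, rfl⟩, T x - S x, hTS, add_sub_cancel _ _⟩

section RelativelyCompactImage

variable {X G : Type*} [TopologicalSpace G] [R1Space G] {C : Set X}

theorem isCompact_closure_image_add [Add G] [ContinuousAdd G] {f g : X → G}
    (hf : IsCompact (closure (f '' C))) (hg : IsCompact (closure (g '' C))) :
    IsCompact (closure ((f + g) '' C)) := by
  refine (hf.add hg).closure_of_subset ?_
  rintro _ ⟨x, hx, rfl⟩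
  exact Set.add_mem_add (subset_closure ⟨x, hx, rfl⟩) (subset_closure ⟨x, hx, rfl⟩)

theorem isCompact_closure_image_const_smul {M : Type*} [SMul M G] [ContinuousConstSMul M G]
    (c : M) {f : X → G} (hf : IsCompact (closure (f '' C))) :
    IsCompact (closure ((c • f) '' C)) := by
  refine (hf.smul c).closure_of_subset ?_
  rintro _ ⟨x, hx, rfl⟩
  exact Set.smul_mem_smul_set (subset_closure ⟨x, hx, rfl⟩)

end RelativelyCompactImage

theorem stmt1_general {E : Type*} [NormedAddCommGroup E] [NormedSpace ℝ E]
    {F : Type*} [AddCommGroup F] [Module ℝ F] [UniformSpace F]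
    [IsUniformAddGroup F] [ContinuousSMul ℝ F]
    (hqc : ∀ s : Set F, IsVonNBounded ℝ s → IsClosed s → IsComplete s)
    (P : Set E → Prop) :
    IsClosed {T : E →L[ℝ] F | ∀ C : Set E, IsBounded C → P C →
        IsCompact (closure (T '' C))} ∧
      (0 : E →L[ℝ] F) ∈ {T : E →L[ℝ] F | ∀ C : Set E, IsBounded C → P C →
        IsCompact (closure (T '' C))} ∧
      (∀ T₁ ∈ {T : E →L[ℝ] F | ∀ C : Set E, IsBounded C → P C →
          IsCompact (closure (T '' C))},
        ∀ T₂ ∈ {T : E →L[ℝ] F | ∀ C : Set E, IsBounded C → P C →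
          IsCompact (closure (T '' C))},
        T₁ + T₂ ∈ {T : E →L[ℝ] F | ∀ C : Set E, IsBounded C → P C →
          IsCompact (closure (T '' C))}) ∧
      (∀ (c : ℝ), ∀ T₁ ∈ {T : E →L[ℝ] F | ∀ C : Set E, IsBounded C → P C →
          IsCompact (closure (T '' C))},
        c • T₁ ∈ {T : E →L[ℝ] F | ∀ C : Set E, IsBounded C → P C →
          IsCompact (closure (T '' C))}) := by
  have : QuasiCompleteSpace ℝ F := ⟨fun s => hqc s⟩
  refine ⟨?_, fun C _ _ => ?_, fun T₁ h₁ T₂ h₂ C hC hPC => ?_, fun c T h C hC hPC => ?_⟩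
  · simp_rw [isCompact_closure_iff_totallyBounded ℝ, Set.ofPred_forall]
    exact isClosed_iInter fun C => isClosed_iInter fun hC => isClosed_iInter fun _ =>
      ContinuousLinearMap.isClosed_setOf_totallyBounded_image
        ((NormedSpace.isVonNBounded_iff ℝ).mpr hC)
  · refine (isCompact_singleton (x := (0 : F))).closure_of_subset ?_
    rintro _ ⟨x, -, rfl⟩
    rfl
  · exact isCompact_closure_image_add (h₁ C hC hPC) (h₂ C hC hPC)
  · exact isCompact_closure_image_const_smul c (h C hC hPC)

/-- Let `E` be a normed space, `F` a quasi-complete Hausdorff locally convex space, and `P` a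
cone property of bounded subsets of `E`. Then the set of continuous linear operators sending
subsets of `E` having `P` onto relatively compact subsets of `F` is a closed linear subspace
of `L(E,F)` with the topology of uniform convergence on bounded sets (the canonical topology
on `E →L[ℝ] F`). -/
theorem stmt1 {E : Type*} [NormedAddCommGroup E] [NormedSpace ℝ E]
    {F : Type*} [AddCommGroup F] [Module ℝ F] [UniformSpace F]
    [IsUniformAddGroup F] [ContinuousSMul ℝ F] [LocallyConvexSpace ℝ F] [T2Space F]
    (hqc : ∀ s : Set F, IsVonNBounded ℝ s → IsClosed s → IsComplete s)
    (P : Set E → Prop)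
    (hcone : ∀ (C : Set E) (r : ℝ), 0 < r → P C → P (r • C)) :
    IsClosed {T : E →L[ℝ] F | ∀ C : Set E, IsBounded C → P C →
        IsCompact (closure (T '' C))} ∧
      (0 : E →L[ℝ] F) ∈ {T : E →L[ℝ] F | ∀ C : Set E, IsBounded C → P C →
        IsCompact (closure (T '' C))} ∧
      (∀ T₁ ∈ {T : E →L[ℝ] F | ∀ C : Set E, IsBounded C → P C →
          IsCompact (closure (T '' C))},
        ∀ T₂ ∈ {T : E →L[ℝ] F | ∀ C : Set E, IsBounded C → P C →
          IsCompact (closure (T '' C))},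
        T₁ + T₂ ∈ {T : E →L[ℝ] F | ∀ C : Set E, IsBounded C → P C →
          IsCompact (closure (T '' C))}) ∧
      (∀ (c : ℝ), ∀ T₁ ∈ {T : E →L[ℝ] F | ∀ C : Set E, IsBounded C → P C →
          IsCompact (closure (T '' C))},
        c • T₁ ∈ {T : E →L[ℝ] F | ∀ C : Set E, IsBounded C → P C →
          IsCompact (closure (T '' C))}) :=
  stmt1_general hqc P
end

section
/- Let E be a Banach lattice and let F be a Banach space. The set of all DW-compact operators from E to F, that is, all bounded linear operators T : E → F such that T(A) is relatively norm compact in F for every disjoint weakly compact subset A of E, is a closed linear subspace of L(E,F) with the operator norm. -/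
/-!
Disjoint weakly compact sets are bounded, so the DW-compact operators are an intersection of the
subspaces `{T | T '' A is relatively compact}` over bounded sets `A`. Each of these is closed by the
ε/2 argument: if `‖T - S‖ * sup_{x ∈ A} ‖x‖ < ε` and `S '' A` is totally bounded, then `T '' A`
lies within `ε` of it and is totally bounded too; in a complete space, total boundedness is
relative compactness.
-/

open Filter Topology Bornology

/-- A norm bounded subset `A` of a Banach lattice `E` is disjoint weakly compact if every
disjoint sequence in `sol(A) = {x : |x| ≤ |y| for some y ∈ A}` is weakly null. -/
def IsDisjointWeaklyCompact {E : Type*} [NormedAddCommGroup E] [Lattice E] [HasSolidNorm E] [IsOrderedAddMonoid E] [NormedSpace ℝ E]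
    (A : Set E) : Prop :=
  IsBounded A ∧
    ∀ x : ℕ → E, (∀ n, ∃ y ∈ A, |x n| ≤ |y|) →
      (∀ i j, i ≠ j → |x i| ⊓ |x j| = 0) →
      ∀ f : E →L[ℝ] ℝ, Tendsto (fun n => f (x n)) atTop (nhds 0)

/-- The set of DW-compact operators from a Banach lattice `E` to a Banach space `F`,
i.e. bounded linear operators sending disjoint weakly compact subsets of `E` onto relatively
norm compact subsets of `F`. -/
def DWcompactOperators (E F : Type*) [NormedAddCommGroup E] [Lattice E] [HasSolidNorm E] [IsOrderedAddMonoid E] [NormedSpace ℝ E]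
    [NormedAddCommGroup F] [NormedSpace ℝ F] : Set (E →L[ℝ] F) :=
  {T | ∀ A : Set E, IsDisjointWeaklyCompact A → IsCompact (closure (T '' A))}

theorem isCompact_closure_iff_totallyBounded_s2 {α : Type*} [UniformSpace α] [CompleteSpace α]
    {s : Set α} : IsCompact (closure s) ↔ TotallyBounded s :=
  ⟨fun h => totallyBounded_closure.1 h.totallyBounded,
    fun h => h.closure.isCompact_of_isClosed isClosed_closure⟩

theorem Metric.totallyBounded_of_forall_dist_lt {α : Type*} [PseudoMetricSpace α] {s : Set α}
    (h : ∀ ε > 0, ∃ t, TotallyBounded t ∧ ∀ x ∈ s, ∃ y ∈ t, dist x y < ε) :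
    TotallyBounded s := by
  refine Metric.totallyBounded_iff.2 fun ε hε => ?_
  obtain ⟨t, ht, hst⟩ := h (ε / 2) (half_pos hε)
  obtain ⟨c, hc, htc⟩ := Metric.totallyBounded_iff.1 ht (ε / 2) (half_pos hε)
  refine ⟨c, hc, fun x hx => ?_⟩
  obtain ⟨y, hy, hxy⟩ := hst x hx
  obtain ⟨z, hz, hyz⟩ := Set.mem_iUnion₂.1 (htc hy)
  refine Set.mem_iUnion₂.2 ⟨z, hz, ?_⟩
  calc dist x z ≤ dist x y + dist y z := dist_triangle x y z
    _ < ε / 2 + ε / 2 := add_lt_add hxy hyz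
    _ = ε := add_halves ε

open Pointwise

namespace ContinuousLinearMap

variable {𝕜 E F : Type*} [NontriviallyNormedField 𝕜] [SeminormedAddCommGroup E] [NormedSpace 𝕜 E]
  [NormedAddCommGroup F] [NormedSpace 𝕜 F]

variable (𝕜 F) in
def relCompactImageOperators (A : Set E) : Submodule 𝕜 (E →L[𝕜] F) where
  carrier := {T | IsCompact (closure (T '' A))}
  zero_mem' := isCompact_singleton.closure_of_subset <| by
    rintro _ ⟨x, -, rfl⟩
    rfl
  add_mem' h₁ h₂ := (h₁.add h₂).closure_of_subset <| by
    rintro _ ⟨x, hx, rfl⟩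
    exact Set.add_mem_add (subset_closure ⟨x, hx, rfl⟩) (subset_closure ⟨x, hx, rfl⟩)
  smul_mem' c _ h := (h.smul c).closure_of_subset <| by
    rintro _ ⟨x, hx, rfl⟩
    exact Set.smul_mem_smul_set (subset_closure ⟨x, hx, rfl⟩)

theorem totallyBounded_image_of_mem_closure {A : Set E} (hA : IsBounded A) {T : E →L[𝕜] F}
    (hT : T ∈ closure {S : E →L[𝕜] F | TotallyBounded (S '' A)}) :
    TotallyBounded (T '' A) := by
  obtain ⟨C, hC, hAC⟩ := hA.exists_pos_norm_le
  refine Metric.totallyBounded_of_forall_dist_lt fun ε hε => ?_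
  obtain ⟨S, hS, hTS⟩ := Metric.mem_closure_iff.1 hT (ε / C) (div_pos hε hC)
  refine ⟨S '' A, hS, ?_⟩
  rintro _ ⟨x, hx, rfl⟩
  refine ⟨S x, ⟨x, hx, rfl⟩, ?_⟩
  calc dist (T x) (S x) = ‖(T - S) x‖ := by rw [dist_eq_norm, sub_apply]
    _ ≤ ‖T - S‖ * ‖x‖ := (T - S).le_opNorm x
    _ ≤ ‖T - S‖ * C := by gcongr; exact hAC x hx
    _ < ε / C * C := by gcongr; rwa [← dist_eq_norm]
    _ = ε := div_mul_cancel₀ ε hC.ne'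

theorem isClosed_relCompactImageOperators [CompleteSpace F] {A : Set E} (hA : IsBounded A) :
    IsClosed (relCompactImageOperators 𝕜 F A : Set (E →L[𝕜] F)) := by
  have hcarrier : (relCompactImageOperators 𝕜 F A : Set (E →L[𝕜] F)) =
      {S : E →L[𝕜] F | TotallyBounded (S '' A)} :=
    Set.ext fun _ => isCompact_closure_iff_totallyBounded_s2
  rw [hcarrier]
  exact isClosed_of_closure_subset fun T hT => totallyBounded_image_of_mem_closure hA hT

end ContinuousLinearMap

open ContinuousLinearMap

theorem stmt2_general (E F : Type*) [NormedAddCommGroup E] [Lattice E] [HasSolidNorm E] [IsOrderedAddMonoid E] [NormedSpace ℝ E]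
    [NormedAddCommGroup F] [NormedSpace ℝ F] [CompleteSpace F] :
    IsClosed (DWcompactOperators E F) ∧
      (0 : E →L[ℝ] F) ∈ DWcompactOperators E F ∧
      (∀ T₁ ∈ DWcompactOperators E F, ∀ T₂ ∈ DWcompactOperators E F,
        T₁ + T₂ ∈ DWcompactOperators E F) ∧
      (∀ (c : ℝ), ∀ T ∈ DWcompactOperators E F, c • T ∈ DWcompactOperators E F) := by
  let S : Submodule ℝ (E →L[ℝ] F) :=
    ⨅ (A : Set E) (_ : IsDisjointWeaklyCompact A), relCompactImageOperators ℝ F A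
  have hS : (S : Set (E →L[ℝ] F)) = DWcompactOperators E F := by
    ext T
    simp [S, DWcompactOperators, relCompactImageOperators]
  rw [← hS]
  refine ⟨?_, S.zero_mem, fun _ h₁ _ h₂ => S.add_mem h₁ h₂, fun c _ h => S.smul_mem c h⟩
  simp only [S, Submodule.coe_iInf]
  exact isClosed_iInter fun A => isClosed_iInter fun hA => isClosed_relCompactImageOperators hA.1

/-- The set of DW-compact operators from a Banach lattice `E` to a Banach space `F` is a
closed linear subspace of `L(E,F)` with the operator norm. -/
theorem stmt2 (E F : Type*) [NormedAddCommGroup E] [Lattice E] [HasSolidNorm E] [IsOrderedAddMonoid E] [NormedSpace ℝ E] [CompleteSpace E]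
    [NormedAddCommGroup F] [NormedSpace ℝ F] [CompleteSpace F] :
    IsClosed (DWcompactOperators E F) ∧
      (0 : E →L[ℝ] F) ∈ DWcompactOperators E F ∧
      (∀ T₁ ∈ DWcompactOperators E F, ∀ T₂ ∈ DWcompactOperators E F,
        T₁ + T₂ ∈ DWcompactOperators E F) ∧
      (∀ (c : ℝ), ∀ T ∈ DWcompactOperators E F, c • T ∈ DWcompactOperators E F) :=
  stmt2_general E F
end

section
/- Let E be a Banach space, let F be a Banach space, and let 1 ≤ p ≤ ∞. The set of all pseudo weakly compact operators of order p from E to F, that is, all bounded linear operators T : E → F such that T(A) is relatively norm compact in F for every bounded subset A of E which is both a Dunford–Pettis set and a weakly p-compact set, is a closed linear subspace of L(E,F) with the operator norm. -/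
open Filter Topology Bornology
open scoped Pointwise
open scoped ENNReal

/-- A bounded subset `A` of a Banach space `E` is a Dunford–Pettis set if
`sup_{x ∈ A} |x*_n(x)| → 0` for every weakly null sequence `(x*_n)` in the dual `E*`. -/
def IsDunfordPettisSet {E : Type*} [NormedAddCommGroup E] [NormedSpace ℝ E]
    (A : Set E) : Prop :=
  IsBounded A ∧
    ∀ f : ℕ → (E →L[ℝ] ℝ),
      (∀ ψ : (E →L[ℝ] ℝ) →L[ℝ] ℝ, Tendsto (fun n => ψ (f n)) atTop (nhds 0)) →
      Tendsto (fun n => ⨆ x : A, |f n x|) atTop (nhds 0)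

/-- For `1 ≤ p ≤ ∞`, a bounded subset `A` of a Banach space `E` is weakly `p`-compact if every
sequence in `A` admits a subsequence `(x_{n_k})` such that, for some `x ∈ A`, the scalar
sequence `(x*(x_{n_k} - x))_k` belongs to `ℓ_p` for every functional `x* ∈ E*`. -/
def IsWeaklyPCompactSet {E : Type*} [NormedAddCommGroup E] [NormedSpace ℝ E]
    (p : ℝ≥0∞) (A : Set E) : Prop :=
  IsBounded A ∧
    ∀ x : ℕ → E, (∀ n, x n ∈ A) →
      ∃ φ : ℕ → ℕ, StrictMono φ ∧ ∃ z ∈ A,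
        ∀ f : E →L[ℝ] ℝ, Memℓp (fun k => f (x (φ k)) - f z) p

/-- The set of pseudo weakly compact operators of order `p` from `E` to `F`, i.e. bounded
linear operators sending bounded sets that are both Dunford–Pettis and weakly `p`-compact
onto relatively norm compact sets. -/
def PseudoWeaklyCompactOperators (E F : Type*) [NormedAddCommGroup E] [NormedSpace ℝ E]
    [NormedAddCommGroup F] [NormedSpace ℝ F] (p : ℝ≥0∞) : Set (E →L[ℝ] F) :=
  {T | ∀ A : Set E, IsBounded A → IsDunfordPettisSet A → IsWeaklyPCompactSet p A →
    IsCompact (closure (T '' A))}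

/-- For Banach spaces `E`, `F` and `1 ≤ p ≤ ∞`, the set of pseudo weakly compact operators of
order `p` from `E` to `F` is a closed linear subspace of `L(E,F)` with the operator norm. -/
theorem stmt3 (E F : Type*) [NormedAddCommGroup E] [NormedSpace ℝ E] [CompleteSpace E]
    [NormedAddCommGroup F] [NormedSpace ℝ F] [CompleteSpace F]
    (p : ℝ≥0∞) (hp : 1 ≤ p) :
    IsClosed (PseudoWeaklyCompactOperators E F p) ∧
      (0 : E →L[ℝ] F) ∈ PseudoWeaklyCompactOperators E F p ∧
      (∀ T₁ ∈ PseudoWeaklyCompactOperators E F p, ∀ T₂ ∈ PseudoWeaklyCompactOperators E F p,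
        T₁ + T₂ ∈ PseudoWeaklyCompactOperators E F p) ∧
      (∀ (c : ℝ), ∀ T ∈ PseudoWeaklyCompactOperators E F p,
        c • T ∈ PseudoWeaklyCompactOperators E F p) := by
  constructor
  · refine isClosed_of_closure_subset ?_
    intro T hT A hA hDP hWP
    have hTB : TotallyBounded (T '' A) := by
      rw [Metric.totallyBounded_iff]
      intro ε hε
      obtain ⟨C, hC⟩ := isBounded_iff_forall_norm_le.1 hA
      set M := max C 0 with hMdef
      have hM0 : (0:ℝ) ≤ M := le_max_right _ _
      have hδ : 0 < ε / (2 * (M + 1)) := by positivity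
      obtain ⟨T', hT'S, hT'd⟩ := Metric.mem_closure_iff.1 hT _ hδ
      have hT'c := hT'S A hA hDP hWP
      obtain ⟨t, htfin, htsub⟩ := Metric.totallyBounded_iff.1
        (hT'c.totallyBounded.subset subset_closure) (ε / 2) (by positivity)
      refine ⟨t, htfin, ?_⟩
      rintro _ ⟨x, hx, rfl⟩
      obtain ⟨y, hy, hball⟩ := Set.mem_iUnion₂.1 (htsub ⟨x, hx, rfl⟩)
      refine Set.mem_iUnion₂.2 ⟨y, hy, ?_⟩
      have h1 : dist (T x) (T' x) ≤ ‖T - T'‖ * ‖x‖ := by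
        rw [dist_eq_norm]
        calc ‖T x - T' x‖ = ‖(T - T') x‖ := by simp
          _ ≤ ‖T - T'‖ * ‖x‖ := (T - T').le_opNorm x
      have h2 : ‖T - T'‖ * ‖x‖ < ε / 2 := by
        have hxM : ‖x‖ ≤ M := le_trans (hC x hx) (le_max_left _ _)
        have hTT' : ‖T - T'‖ < ε / (2 * (M + 1)) := by
          rw [← dist_eq_norm]; exact hT'd
        calc ‖T - T'‖ * ‖x‖ ≤ ‖T - T'‖ * M :=
              mul_le_mul_of_nonneg_left hxM (norm_nonneg _)
          _ < (ε / (2 * (M + 1))) * (M + 1) := by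
              apply mul_lt_mul' (le_of_lt hTT') ?_ hM0 hδ
              · nlinarith [norm_nonneg (T - T')]
          _ = ε / 2 := by field_simp
      have h3 : dist (T' x) y < ε / 2 := Metric.mem_ball.1 hball
      have := dist_triangle (T x) (T' x) y
      rw [Metric.mem_ball]
      linarith
    exact TotallyBounded.isCompact_of_isClosed hTB.closure isClosed_closure
  · refine ⟨?_, ?_, ?_⟩
    · intro A hA _ _
      have h : (0 : E →L[ℝ] F) '' A ⊆ {0} := by rintro y ⟨x, -, rfl⟩; simp
      exact isCompact_singleton.of_isClosed_subset isClosed_closure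
        (closure_minimal h isClosed_singleton)
    · intro T₁ h₁ T₂ h₂ A hA hDP hWP
      have hsub : (T₁ + T₂) '' A ⊆ closure (T₁ '' A) + closure (T₂ '' A) := by
        rintro _ ⟨x, hx, rfl⟩
        exact Set.add_mem_add (subset_closure ⟨x, hx, rfl⟩) (subset_closure ⟨x, hx, rfl⟩)
      have hcomp : IsCompact (closure (T₁ '' A) + closure (T₂ '' A)) :=
        (h₁ A hA hDP hWP).add (h₂ A hA hDP hWP)
      exact hcomp.of_isClosed_subset isClosed_closure
        (closure_minimal hsub hcomp.isClosed)
    · intro c T hT A hA hDP hWP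
      have hsub : (c • T) '' A ⊆ (c • ·) '' closure (T '' A) := by
        rintro _ ⟨x, hx, rfl⟩
        exact ⟨T x, subset_closure ⟨x, hx, rfl⟩, rfl⟩
      have hcomp : IsCompact ((c • ·) '' closure (T '' A)) :=
        (hT A hA hDP hWP).image (continuous_const_smul c)
      exact hcomp.of_isClosed_subset isClosed_closure
        (closure_minimal hsub hcomp.isClosed)
end

section
/- Let E_1, …, E_m be Banach spaces and let F be a Banach lattice. The set of all L-weakly compact m-linear operators, that is, all continuous m-linear operators A : E_1 × ⋯ × E_m → F such that A(B), where B is the closed unit ball of E_1 × ⋯ × E_m with the maximum norm, is an L-weakly compact subset of F, is a closed linear subspace of L(E_1,…,E_m;F). -/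
open Filter Topology Bornology

/-- A norm bounded subset `A` of a Banach lattice is L-weakly compact if every disjoint
sequence in `sol(A) = {x : |x| ≤ |y| for some y ∈ A}` is norm null. -/
def IsLWeaklyCompactSet' {F : Type*} [NormedAddCommGroup F] [Lattice F] [IsOrderedAddMonoid F] [HasSolidNorm F] (A : Set F) : Prop :=
  IsBounded A ∧
    ∀ x : ℕ → F, (∀ n, ∃ y ∈ A, |x n| ≤ |y|) →
      (∀ i j, i ≠ j → |x i| ⊓ |x j| = 0) →
      Tendsto (fun n => ‖x n‖) atTop (nhds 0)

/-- The set of L-weakly compact `m`-linear operators from Banach spaces `E₁, …, E_m` to a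
Banach lattice `F`: the image of the closed unit ball of `E₁ × ⋯ × E_m` (maximum norm) is an
L-weakly compact subset of `F`. -/
def LWeaklyCompactMultilinear {m : ℕ} (E : Fin m → Type*) (F : Type*)
    [∀ i, NormedAddCommGroup (E i)] [∀ i, NormedSpace ℝ (E i)]
    [NormedAddCommGroup F] [Lattice F] [IsOrderedAddMonoid F] [HasSolidNorm F] [NormedSpace ℝ F] :
    Set (ContinuousMultilinearMap ℝ E F) :=
  {A | IsLWeaklyCompactSet' (⇑A '' Metric.closedBall (0 : ∀ i, E i) 1)}

/-! Each closure property reduces to an inclusion of images of the unit ball: the image under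
`A₁ + A₂` lies in the sum of the two images, the image under `c • A` is `c •` the image under `A`,
and the image under `A` lies within `‖A - g‖` of the image under `g`. On the level of sets the key
is Riesz decomposition: if `|x| ≤ |a| + |b|`, then `|x| = (|x| ⊓ |a|) + (|x| - |x| ⊓ |a|)` with
summands dominated by `|a|` and `|b|` respectively and both by `|x|`, so a disjoint sequence in
`sol (A + B)` splits into disjoint sequences in `sol A` and `sol B`. -/

lemma nonneg_of_two_pow_nsmul_nonneg {α : Type*} [Lattice α] [AddGroup α] [AddLeftMono α]
    [AddRightMono α] {a : α} : ∀ n : ℕ, 0 ≤ 2 ^ n • a → 0 ≤ a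
  | 0, h => by simpa using h
  | n + 1, h => by
    rw [pow_succ, mul_nsmul] at h
    exact nonneg_of_two_pow_nsmul_nonneg n (nsmul_two_semiclosed h)

section RealScalars

variable {F : Type*} [NormedAddCommGroup F] [Lattice F] [IsOrderedAddMonoid F] [HasSolidNorm F]
  [NormedSpace ℝ F]

/-- The positive cone is closed and stable under halving, so it is stable under multiplication by
the dyadic approximations `⌊c 2ⁿ⌋₊ / 2ⁿ` of any `c ≥ 0`, hence by `c` itself. -/
instance HasSolidNorm.toPosSMulMono : PosSMulMono ℝ F := by
  refine PosSMulMono.of_smul_nonneg fun c hc y hy => ?_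
  have hdyadic (n : ℕ) : 0 ≤ ((⌊c * 2 ^ n⌋₊ : ℝ) / 2 ^ n) • y := by
    refine nonneg_of_two_pow_nsmul_nonneg n ?_
    rw [← Nat.cast_smul_eq_nsmul ℝ, smul_smul, Nat.cast_pow, Nat.cast_ofNat,
      mul_div_cancel₀ _ (by positivity), Nat.cast_smul_eq_nsmul]
    exact nsmul_nonneg hy _
  have hlim : Tendsto (fun n : ℕ => ((⌊c * 2 ^ n⌋₊ : ℝ) / 2 ^ n) • y) atTop (𝓝 (c • y)) :=
    ((tendsto_nat_floor_mul_div_atTop hc).comp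
      (tendsto_pow_atTop_atTop_of_one_lt one_lt_two)).smul_const y
  exact isClosed_nonneg.mem_of_tendsto hlim (Eventually.of_forall hdyadic)

lemma abs_real_smul (c : ℝ) (y : F) : |c • y| = |c| • |y| := by
  have habs_of_nonneg {c : ℝ} (hc : 0 ≤ c) (y : F) : |c • y| = c • |y| := by
    rcases hc.eq_or_lt with rfl | hc
    · simp
    · have := (OrderIso.smulRight hc).map_sup y (-y)
      simp only [OrderIso.smulRight_apply, smul_neg] at this
      rw [abs, abs, this]
  rcases le_total 0 c with hc | hc
  · rw [abs_of_nonneg hc, habs_of_nonneg hc]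
  · rw [abs_of_nonpos hc, ← neg_smul_neg, habs_of_nonneg (neg_nonneg.2 hc), abs_neg]

end RealScalars

open scoped Pointwise

section DisjointSequences

variable {F : Type*} [Lattice F] [AddCommGroup F] [IsOrderedAddMonoid F]

abbrev IsDisjointSeq (x : ℕ → F) : Prop :=
  ∀ i j, i ≠ j → |x i| ⊓ |x j| = 0

lemma IsDisjointSeq.of_abs_le {x u : ℕ → F} (hx : IsDisjointSeq x) (hu : ∀ n, |u n| ≤ |x n|) :
    IsDisjointSeq u := fun i j hij =>
  le_antisymm ((inf_le_inf (hu i) (hu j)).trans (hx i j hij).le)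
    (le_inf (abs_nonneg _) (abs_nonneg _))

end DisjointSequences

section LWeaklyCompact

variable {F : Type*} [NormedAddCommGroup F] [Lattice F] [IsOrderedAddMonoid F] [HasSolidNorm F]

lemma IsDisjointSeq.exists_split_of_mem_sol_add {A B : Set F} {x : ℕ → F} (hx : IsDisjointSeq x)
    (hsol : ∀ n, ∃ y ∈ A + B, |x n| ≤ |y|) :
    ∃ u w : ℕ → F, (∀ n, ∃ y ∈ A, |u n| ≤ |y|) ∧ IsDisjointSeq u ∧
      (∀ n, ∃ y ∈ B, |w n| ≤ |y|) ∧ IsDisjointSeq w ∧ ∀ n, ‖x n‖ ≤ ‖u n‖ + ‖w n‖ := by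
  choose y hy hxy using hsol
  choose a ha b hb hab using fun n => Set.mem_add.1 (hy n)
  have hle (n : ℕ) : |x n| ≤ |a n| + |b n| := (hab n ▸ hxy n).trans (abs_add_le _ _)
  set u := fun n => |x n| ⊓ |a n|
  set w := fun n => |x n| - u n
  have hu0 (n : ℕ) : 0 ≤ u n := le_inf (abs_nonneg _) (abs_nonneg _)
  have hw0 (n : ℕ) : 0 ≤ w n := sub_nonneg.2 inf_le_left
  have hwb (n : ℕ) : w n ≤ |b n| := by
    refine (sub_inf _ _ _).trans_le (sup_le ?_ ?_)
    · exact (sub_self _).trans_le (abs_nonneg _)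
    · exact sub_left_le_of_le_add (hle n)
  refine ⟨u, w, fun n => ⟨a n, ha n, (abs_of_nonneg (hu0 n)).trans_le inf_le_right⟩,
    hx.of_abs_le fun n => (abs_of_nonneg (hu0 n)).trans_le inf_le_left,
    fun n => ⟨b n, hb n, (abs_of_nonneg (hw0 n)).trans_le (hwb n)⟩,
    hx.of_abs_le fun n => (abs_of_nonneg (hw0 n)).trans_le (sub_le_self _ (hu0 n)), fun n => ?_⟩
  calc ‖x n‖ = ‖u n + w n‖ := by rw [add_sub_cancel, norm_abs_eq_norm]
    _ ≤ ‖u n‖ + ‖w n‖ := norm_add_le _ _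

lemma IsLWeaklyCompactSet'.mono {A B : Set F} (hB : IsLWeaklyCompactSet' B) (hAB : A ⊆ B) :
    IsLWeaklyCompactSet' A :=
  ⟨hB.1.subset hAB, fun x hx => hB.2 x fun n =>
    let ⟨y, hyA, hxy⟩ := hx n
    ⟨y, hAB hyA, hxy⟩⟩

lemma isLWeaklyCompactSet'_zero : IsLWeaklyCompactSet' ({0} : Set F) := by
  refine ⟨Bornology.isBounded_singleton, fun x hx _ => ?_⟩
  have hx0 (n : ℕ) : ‖x n‖ = 0 := by
    obtain ⟨y, rfl, hxy⟩ := hx n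
    exact (norm_nonneg _).antisymm' (by simpa using HasSolidNorm.solid hxy)
  simp only [hx0, tendsto_const_nhds]

lemma IsLWeaklyCompactSet'.add {A B : Set F} (hA : IsLWeaklyCompactSet' A)
    (hB : IsLWeaklyCompactSet' B) : IsLWeaklyCompactSet' (A + B) := by
  refine ⟨hA.1.add hB.1, fun x hx hdisj => ?_⟩
  obtain ⟨u, w, huA, hu, hwB, hw, hxuw⟩ := IsDisjointSeq.exists_split_of_mem_sol_add hdisj hx
  exact squeeze_zero (fun n => norm_nonneg _) hxuw
    (by simpa using (hA.2 u huA hu).add (hB.2 w hwB hw))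

lemma IsLWeaklyCompactSet'.of_forall_subset_add_closedBall {A : Set F}
    (h : ∀ ε > 0, ∃ B, IsLWeaklyCompactSet' B ∧ A ⊆ B + Metric.closedBall 0 ε) :
    IsLWeaklyCompactSet' A := by
  refine ⟨?_, fun x hx hdisj => ?_⟩
  · obtain ⟨B, hB, hAB⟩ := h 1 one_pos
    exact (hB.1.add Metric.isBounded_closedBall).subset hAB
  rw [NormedAddGroup.tendsto_nhds_zero]
  intro ε hε
  obtain ⟨B, hB, hAB⟩ := h (ε / 2) (half_pos hε)
  obtain ⟨u, w, huB, hu, hwε, -, hxuw⟩ := IsDisjointSeq.exists_split_of_mem_sol_add hdisj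
    fun n => let ⟨y, hyA, hxy⟩ := hx n; ⟨y, hAB hyA, hxy⟩
  have hw (n : ℕ) : ‖w n‖ ≤ ε / 2 := by
    obtain ⟨y, hy, hwy⟩ := hwε n
    exact (HasSolidNorm.solid hwy).trans (mem_closedBall_zero_iff.1 hy : ‖y‖ ≤ ε / 2)
  filter_upwards [(hB.2 u huB hu).eventually (gt_mem_nhds (half_pos hε))] with n hn
  rw [norm_norm]
  linarith [hxuw n, hw n]

lemma IsLWeaklyCompactSet'.smul [NormedSpace ℝ F] {A : Set F} (hA : IsLWeaklyCompactSet' A)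
    (c : ℝ) : IsLWeaklyCompactSet' (c • A) := by
  rcases eq_or_ne c 0 with rfl | hc
  · exact isLWeaklyCompactSet'_zero.mono (Set.zero_smul_set_subset A)
  refine ⟨hA.1.smul₀ c, fun x hx hdisj => ?_⟩
  have hc' : 0 < |c|⁻¹ := inv_pos.2 (abs_pos.2 hc)
  have habs (n : ℕ) : |c⁻¹ • x n| = |c|⁻¹ • |x n| := by rw [abs_real_smul, abs_inv]
  have hsol (n : ℕ) : ∃ y ∈ A, |c⁻¹ • x n| ≤ |y| := by
    obtain ⟨_, ⟨y, hy, rfl⟩, hxy⟩ := hx n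
    refine ⟨y, hy, ?_⟩
    rw [habs, inv_smul_le_iff_of_pos (abs_pos.2 hc), ← abs_real_smul]
    exact hxy
  have hdisj' : IsDisjointSeq fun n => c⁻¹ • x n := fun i j hij =>
    calc |c⁻¹ • x i| ⊓ |c⁻¹ • x j| = |c|⁻¹ • (|x i| ⊓ |x j|) := by
          rw [habs, habs]; exact ((OrderIso.smulRight hc').map_inf _ _).symm
      _ = 0 := by rw [hdisj i j hij, smul_zero]
  have := (hA.2 _ hsol hdisj').const_mul |c|
  simpa [norm_smul, ← mul_assoc, mul_inv_cancel₀ (abs_pos.2 hc).ne'] using this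

end LWeaklyCompact

namespace ContinuousMultilinearMap

variable {ι : Type*} [Fintype ι] {E : ι → Type*} [∀ i, NormedAddCommGroup (E i)]
  [∀ i, NormedSpace ℝ (E i)] {F : Type*} [NormedAddCommGroup F] [NormedSpace ℝ F]

lemma image_closedBall_subset_add_closedBall (f g : ContinuousMultilinearMap ℝ E F) :
    ⇑f '' Metric.closedBall 0 1 ⊆ ⇑g '' Metric.closedBall 0 1 + Metric.closedBall 0 ‖f - g‖ := by
  rintro _ ⟨v, hv, rfl⟩
  refine ⟨g v, Set.mem_image_of_mem g hv, (f - g) v, ?_, by simp⟩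
  exact mem_closedBall_zero_iff.2 ((f - g).unit_le_opNorm (mem_closedBall_zero_iff.1 hv))

end ContinuousMultilinearMap

theorem stmt6_general {m : ℕ} (E : Fin m → Type*) (F : Type*)
    [∀ i, NormedAddCommGroup (E i)] [∀ i, NormedSpace ℝ (E i)]
    [NormedAddCommGroup F] [Lattice F] [IsOrderedAddMonoid F] [HasSolidNorm F] [NormedSpace ℝ F] :
    IsClosed (LWeaklyCompactMultilinear E F) ∧
      (0 : ContinuousMultilinearMap ℝ E F) ∈ LWeaklyCompactMultilinear E F ∧
      (∀ A₁ ∈ LWeaklyCompactMultilinear E F, ∀ A₂ ∈ LWeaklyCompactMultilinear E F,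
        A₁ + A₂ ∈ LWeaklyCompactMultilinear E F) ∧
      (∀ (c : ℝ), ∀ A ∈ LWeaklyCompactMultilinear E F,
        c • A ∈ LWeaklyCompactMultilinear E F) := by
  refine ⟨isClosed_of_closure_subset fun A hA => ?_, ?_, fun A₁ h₁ A₂ h₂ => ?_, fun c A hA => ?_⟩
  · refine IsLWeaklyCompactSet'.of_forall_subset_add_closedBall fun ε hε => ?_
    obtain ⟨g, hg, hAg⟩ := Metric.mem_closure_iff.1 hA ε hε
    refine ⟨_, hg, (A.image_closedBall_subset_add_closedBall g).trans ?_⟩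
    exact Set.add_subset_add_left (Metric.closedBall_subset_closedBall (dist_eq_norm A g ▸ hAg.le))
  · exact isLWeaklyCompactSet'_zero.mono (by rintro _ ⟨v, -, rfl⟩; rfl)
  · refine (IsLWeaklyCompactSet'.add h₁ h₂).mono ?_
    rintro _ ⟨v, hv, rfl⟩
    exact Set.add_mem_add (Set.mem_image_of_mem A₁ hv) (Set.mem_image_of_mem A₂ hv)
  · refine (IsLWeaklyCompactSet'.smul hA c).mono ?_
    rintro _ ⟨v, hv, rfl⟩
    exact Set.smul_mem_smul_set (Set.mem_image_of_mem A hv)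

/-- For Banach spaces `E₁, …, E_m` and a Banach lattice `F`, the set of L-weakly compact
`m`-linear operators is a closed linear subspace of `L(E₁,…,E_m;F)`. -/
theorem stmt6 {m : ℕ} (E : Fin m → Type*) (F : Type*)
    [∀ i, NormedAddCommGroup (E i)] [∀ i, NormedSpace ℝ (E i)] [∀ i, CompleteSpace (E i)]
    [NormedAddCommGroup F] [Lattice F] [IsOrderedAddMonoid F] [HasSolidNorm F] [NormedSpace ℝ F] [CompleteSpace F] :
    IsClosed (LWeaklyCompactMultilinear E F) ∧
      (0 : ContinuousMultilinearMap ℝ E F) ∈ LWeaklyCompactMultilinear E F ∧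
      (∀ A₁ ∈ LWeaklyCompactMultilinear E F, ∀ A₂ ∈ LWeaklyCompactMultilinear E F,
        A₁ + A₂ ∈ LWeaklyCompactMultilinear E F) ∧
      (∀ (c : ℝ), ∀ A ∈ LWeaklyCompactMultilinear E F,
        c • A ∈ LWeaklyCompactMultilinear E F) :=
  stmt6_general E F
end

section
/- Let E_1, …, E_m be Banach lattices and let F be a Banach space. The set of all M-weakly compact m-linear operators, that is, all continuous m-linear operators A : E_1 × ⋯ × E_m → F sending norm bounded disjoint sequences in E_1 × ⋯ × E_m (with the coordinatewise order) to norm null sequences in F, is a closed linear subspace of L(E_1,…,E_m;F). -/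
/-!
For a fixed bounded sequence `x`, the evaluations `A ↦ A (x n)` are Lipschitz in `A` with the
common constant `(sup ‖x n‖) ^ m`, hence equicontinuous, so the operators along which `A (x n) → 0`
form a closed subspace. The M-weakly compact operators are the intersection of these subspaces
over all bounded disjoint sequences `x`.
-/

open Filter Topology Bornology

/-- The set of M-weakly compact `m`-linear operators from Banach lattices `E₁, …, E_m` to a
Banach space `F`: operators sending norm bounded disjoint sequences in `E₁ × ⋯ × E_m`
(coordinatewise order, maximum norm) to norm null sequences in `F`. -/
def MWeaklyCompactMultilinear {m : ℕ} (E : Fin m → Type*) (F : Type*)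
    [∀ i, NormedAddCommGroup (E i)] [∀ i, Lattice (E i)]
    [∀ i, IsOrderedAddMonoid (E i)] [∀ i, HasSolidNorm (E i)] [∀ i, NormedSpace ℝ (E i)]
    [NormedAddCommGroup F] [NormedSpace ℝ F] :
    Set (ContinuousMultilinearMap ℝ E F) :=
  {A | ∀ x : ℕ → ∀ i, E i, IsBounded (Set.range x) →
    (∀ j k, j ≠ k → |x j| ⊓ |x k| = 0) →
    Tendsto (fun n => ‖A (x n)‖) atTop (nhds 0)}

namespace ContinuousMultilinearMap

variable {𝕜 ι α : Type*} [NontriviallyNormedField 𝕜] [Fintype ι] {E : ι → Type*} {F : Type*}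
  [∀ i, NormedAddCommGroup (E i)] [∀ i, NormedSpace 𝕜 (E i)]
  [NormedAddCommGroup F] [NormedSpace 𝕜 F]

theorem equicontinuous_apply_of_isBounded {x : α → ∀ i, E i} (hx : IsBounded (Set.range x)) :
    Equicontinuous fun a (A : ContinuousMultilinearMap 𝕜 E F) => A (x a) := by
  obtain ⟨C, hC_pos, hC⟩ := hx.exists_pos_norm_le
  lift C to NNReal using hC_pos.le
  refine (LipschitzWith.uniformEquicontinuous _ (C ^ Fintype.card ι) fun a => ?_).equicontinuous
  refine LipschitzWith.of_dist_le_mul fun A B => ?_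
  rw [dist_eq_norm, dist_eq_norm, ← sub_apply, NNReal.coe_pow, mul_comm]
  exact (A - B).le_opNorm_mul_pow_card_of_le (hC _ ⟨a, rfl⟩)

variable (F) in
def tendstoZeroAlong (l : Filter α) (x : α → ∀ i, E i) :
    Submodule 𝕜 (ContinuousMultilinearMap 𝕜 E F) where
  carrier := {A | Tendsto (fun a => A (x a)) l (𝓝 0)}
  zero_mem' := tendsto_const_nhds
  add_mem' hA hB := by simpa using hA.add hB
  smul_mem' c _ hA := by simpa using hA.const_smul c

theorem isClosed_tendstoZeroAlong {l : Filter α} {x : α → ∀ i, E i}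
    (hx : IsBounded (Set.range x)) :
    IsClosed (tendstoZeroAlong (𝕜 := 𝕜) F l x : Set (ContinuousMultilinearMap 𝕜 E F)) :=
  (equicontinuous_apply_of_isBounded hx).isClosed_setOfPred_tendsto continuous_const

end ContinuousMultilinearMap

open ContinuousMultilinearMap

section MWeaklyCompact

variable (𝕜 : Type*) {ι : Type*} [NontriviallyNormedField 𝕜] [Fintype ι] (E : ι → Type*)
  (F : Type*) [∀ i, NormedAddCommGroup (E i)] [∀ i, Lattice (E i)] [∀ i, NormedSpace 𝕜 (E i)]
  [NormedAddCommGroup F] [NormedSpace 𝕜 F]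

noncomputable def mWeaklyCompactSubmodule : Submodule 𝕜 (ContinuousMultilinearMap 𝕜 E F) :=
  ⨅ (x : ℕ → ∀ i, E i) (_ : IsBounded (Set.range x)) (_ : ∀ j k, j ≠ k → |x j| ⊓ |x k| = 0),
    tendstoZeroAlong F atTop x

theorem isClosed_mWeaklyCompactSubmodule :
    IsClosed (mWeaklyCompactSubmodule 𝕜 E F : Set (ContinuousMultilinearMap 𝕜 E F)) := by
  simp only [mWeaklyCompactSubmodule, Submodule.coe_iInf]
  exact isClosed_iInter fun x => isClosed_iInter fun hx => isClosed_iInter fun _ =>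
    isClosed_tendstoZeroAlong hx

end MWeaklyCompact

theorem coe_mWeaklyCompactSubmodule {m : ℕ} (E : Fin m → Type*) (F : Type*)
    [∀ i, NormedAddCommGroup (E i)] [∀ i, Lattice (E i)]
    [∀ i, IsOrderedAddMonoid (E i)] [∀ i, HasSolidNorm (E i)] [∀ i, NormedSpace ℝ (E i)]
    [NormedAddCommGroup F] [NormedSpace ℝ F] :
    (mWeaklyCompactSubmodule ℝ E F : Set _) = MWeaklyCompactMultilinear E F := by
  ext A
  simp only [mWeaklyCompactSubmodule, Submodule.coe_iInf, Set.mem_iInter, SetLike.mem_coe,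
    tendstoZeroAlong, Submodule.mem_mk, AddSubmonoid.mem_mk, AddSubsemigroup.mem_mk,
    Set.mem_ofPred_eq, MWeaklyCompactMultilinear, ← tendsto_zero_iff_norm_tendsto_zero]

theorem stmt8_general {m : ℕ} (E : Fin m → Type*) (F : Type*)
    [∀ i, NormedAddCommGroup (E i)] [∀ i, Lattice (E i)]
    [∀ i, IsOrderedAddMonoid (E i)] [∀ i, HasSolidNorm (E i)] [∀ i, NormedSpace ℝ (E i)]
    [NormedAddCommGroup F] [NormedSpace ℝ F] :
    IsClosed (MWeaklyCompactMultilinear E F) ∧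
      (0 : ContinuousMultilinearMap ℝ E F) ∈ MWeaklyCompactMultilinear E F ∧
      (∀ A₁ ∈ MWeaklyCompactMultilinear E F, ∀ A₂ ∈ MWeaklyCompactMultilinear E F,
        A₁ + A₂ ∈ MWeaklyCompactMultilinear E F) ∧
      (∀ (c : ℝ), ∀ A ∈ MWeaklyCompactMultilinear E F,
        c • A ∈ MWeaklyCompactMultilinear E F) := by
  rw [← coe_mWeaklyCompactSubmodule]
  exact ⟨isClosed_mWeaklyCompactSubmodule ℝ E F, zero_mem _, fun _ h₁ _ h₂ => add_mem h₁ h₂,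
    fun c _ h => Submodule.smul_mem _ c h⟩

/-- For Banach lattices `E₁, …, E_m` and a Banach space `F`, the set of M-weakly compact
`m`-linear operators is a closed linear subspace of `L(E₁,…,E_m;F)`. -/
theorem stmt8 {m : ℕ} (E : Fin m → Type*) (F : Type*)
    [∀ i, NormedAddCommGroup (E i)] [∀ i, Lattice (E i)]
    [∀ i, IsOrderedAddMonoid (E i)] [∀ i, HasSolidNorm (E i)] [∀ i, NormedSpace ℝ (E i)]
    [∀ i, CompleteSpace (E i)]
    [NormedAddCommGroup F] [NormedSpace ℝ F] [CompleteSpace F] :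
    IsClosed (MWeaklyCompactMultilinear E F) ∧
      (0 : ContinuousMultilinearMap ℝ E F) ∈ MWeaklyCompactMultilinear E F ∧
      (∀ A₁ ∈ MWeaklyCompactMultilinear E F, ∀ A₂ ∈ MWeaklyCompactMultilinear E F,
        A₁ + A₂ ∈ MWeaklyCompactMultilinear E F) ∧
      (∀ (c : ℝ), ∀ A ∈ MWeaklyCompactMultilinear E F,
        c • A ∈ MWeaklyCompactMultilinear E F) :=
  stmt8_general E F
end

section
/- Let E_1, …, E_m, F be Banach spaces, let 𝔑 be the set of m-bounded sequences in E_1 × ⋯ × E_m, and let ∼ be an arbitrary relation from 𝔑 to E_1 × ⋯ × E_m. Then the set of continuous m-linear operators A : E_1 × ⋯ × E_m → F such that A(x_1^n,…,x_m^n) → A(x_1,…,x_m) in F whenever the sequence ((x_1^n,…,x_m^n))_n is m-bounded and ((x_1^n,…,x_m^n))_n ∼ (x_1,…,x_m), is a closed linear subspace of L(E_1,…,E_m;F). -/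
open Filter Topology

/-- A sequence in `E₁ × ⋯ × E_m` is m-bounded if `sup_n ‖x₁ⁿ‖⋯‖x_mⁿ‖ < ∞`. -/
def MBoundedSeq {m : ℕ} {E : Fin m → Type*} [∀ i, NormedAddCommGroup (E i)]
    (x : ℕ → ∀ i, E i) : Prop :=
  ∃ C : ℝ, ∀ n, ∏ i, ‖x n i‖ ≤ C

/-- Let `E₁, …, E_m, F` be Banach spaces and let `∼` be an arbitrary relation from the
m-bounded sequences of `E₁ × ⋯ × E_m` to `E₁ × ⋯ × E_m`. The set of continuous `m`-linear
operators `A` such that `A(x₁ⁿ,…,x_mⁿ) → A(x₁,…,x_m)` whenever `((x₁ⁿ,…,x_mⁿ))_n` is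
m-bounded and `((x₁ⁿ,…,x_mⁿ))_n ∼ (x₁,…,x_m)`, is a closed linear subspace of
`L(E₁,…,E_m;F)`. -/
theorem stmt10 {m : ℕ} (E : Fin m → Type*) (F : Type*)
    [∀ i, NormedAddCommGroup (E i)] [∀ i, NormedSpace ℝ (E i)] [∀ i, CompleteSpace (E i)]
    [NormedAddCommGroup F] [NormedSpace ℝ F] [CompleteSpace F]
    (rel : (ℕ → ∀ i, E i) → (∀ i, E i) → Prop) :
    IsClosed {A : ContinuousMultilinearMap ℝ E F |
        ∀ (x : ℕ → ∀ i, E i) (x₀ : ∀ i, E i), MBoundedSeq x → rel x x₀ →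
          Tendsto (fun n => A (x n)) atTop (nhds (A x₀))} ∧
      (0 : ContinuousMultilinearMap ℝ E F) ∈
        {A : ContinuousMultilinearMap ℝ E F |
          ∀ (x : ℕ → ∀ i, E i) (x₀ : ∀ i, E i), MBoundedSeq x → rel x x₀ →
            Tendsto (fun n => A (x n)) atTop (nhds (A x₀))} ∧
      (∀ A₁ ∈ {A : ContinuousMultilinearMap ℝ E F |
          ∀ (x : ℕ → ∀ i, E i) (x₀ : ∀ i, E i), MBoundedSeq x → rel x x₀ →
            Tendsto (fun n => A (x n)) atTop (nhds (A x₀))},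
        ∀ A₂ ∈ {A : ContinuousMultilinearMap ℝ E F |
          ∀ (x : ℕ → ∀ i, E i) (x₀ : ∀ i, E i), MBoundedSeq x → rel x x₀ →
            Tendsto (fun n => A (x n)) atTop (nhds (A x₀))},
        A₁ + A₂ ∈ {A : ContinuousMultilinearMap ℝ E F |
          ∀ (x : ℕ → ∀ i, E i) (x₀ : ∀ i, E i), MBoundedSeq x → rel x x₀ →
            Tendsto (fun n => A (x n)) atTop (nhds (A x₀))}) ∧
      (∀ (c : ℝ), ∀ A₁ ∈ {A : ContinuousMultilinearMap ℝ E F |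
          ∀ (x : ℕ → ∀ i, E i) (x₀ : ∀ i, E i), MBoundedSeq x → rel x x₀ →
            Tendsto (fun n => A (x n)) atTop (nhds (A x₀))},
        c • A₁ ∈ {A : ContinuousMultilinearMap ℝ E F |
          ∀ (x : ℕ → ∀ i, E i) (x₀ : ∀ i, E i), MBoundedSeq x → rel x x₀ →
            Tendsto (fun n => A (x n)) atTop (nhds (A x₀))}) := by
  refine ⟨?_, ?_, ?_, ?_⟩
  · apply IsSeqClosed.isClosed
    intro u A hu hA x x₀ hbdd hrel
    obtain ⟨C, hC⟩ := hbdd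
    have hC0 : 0 ≤ C := le_trans (by positivity) (hC 0)
    rw [Metric.tendsto_atTop]
    intro ε hε
    set D : ℝ := max C (∏ i, ‖x₀ i‖) + 1 with hDdef
    have hD : 0 < D := by
      have : (0:ℝ) ≤ max C (∏ i, ‖x₀ i‖) := le_trans hC0 (le_max_left _ _)
      linarith
    have hεD : 0 < ε / (3 * D) := by positivity
    rw [Metric.tendsto_atTop] at hA
    obtain ⟨k, hk⟩ := hA (ε / (3 * D)) hεD
    have hkA : ‖u k - A‖ < ε / (3 * D) := by
      have := hk k le_rfl
      rwa [dist_eq_norm] at this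
    have htk := hu k x x₀ ⟨C, hC⟩ hrel
    rw [Metric.tendsto_atTop] at htk
    obtain ⟨N, hN⟩ := htk (ε / 3) (by positivity)
    refine ⟨N, fun n hn => ?_⟩
    have h1 : ‖A (x n) - u k (x n)‖ ≤ ε / 3 := by
      have := (u k - A).le_opNorm (x n)
      rw [ContinuousMultilinearMap.sub_apply] at this
      have h2 : ‖u k - A‖ * ∏ i, ‖x n i‖ ≤ (ε / (3 * D)) * D := by
        apply mul_le_mul hkA.le (le_trans (hC n) (by
          have := le_max_left C (∏ i, ‖x₀ i‖); linarith)) (by positivity) hεD.le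
      have h3 : (ε / (3 * D)) * D = ε / 3 := by field_simp
      calc ‖A (x n) - u k (x n)‖ = ‖u k (x n) - A (x n)‖ := norm_sub_rev _ _
        _ ≤ ‖u k - A‖ * ∏ i, ‖x n i‖ := this
        _ ≤ ε / 3 := by rw [← h3]; exact h2
    have h4 : ‖u k x₀ - A x₀‖ ≤ ε / 3 := by
      have := (u k - A).le_opNorm x₀
      rw [ContinuousMultilinearMap.sub_apply] at this
      have h2 : ‖u k - A‖ * ∏ i, ‖x₀ i‖ ≤ (ε / (3 * D)) * D := by
        apply mul_le_mul hkA.le (by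
          have := le_max_right C (∏ i, ‖x₀ i‖); linarith) (by positivity) hεD.le
      have h3 : (ε / (3 * D)) * D = ε / 3 := by field_simp
      calc ‖u k x₀ - A x₀‖ ≤ ‖u k - A‖ * ∏ i, ‖x₀ i‖ := this
        _ ≤ ε / 3 := by rw [← h3]; exact h2
    have h5 : dist (u k (x n)) (u k x₀) < ε / 3 := hN n hn
    rw [dist_eq_norm] at h5 ⊢
    calc ‖A (x n) - A x₀‖
        = ‖(A (x n) - u k (x n)) + (u k (x n) - u k x₀) + (u k x₀ - A x₀)‖ := by congr 1; abel
      _ ≤ ‖(A (x n) - u k (x n)) + (u k (x n) - u k x₀)‖ + ‖u k x₀ - A x₀‖ :=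
          norm_add_le _ _
      _ ≤ ‖A (x n) - u k (x n)‖ + ‖u k (x n) - u k x₀‖ + ‖u k x₀ - A x₀‖ := by
          gcongr; exact norm_add_le _ _
      _ < ε / 3 + ε / 3 + ε / 3 := by
          apply add_lt_add_of_lt_of_le (add_lt_add_of_le_of_lt h1 h5) h4
      _ = ε := by ring
  · intro x x₀ _ _
    simp only [ContinuousMultilinearMap.zero_apply]
    exact tendsto_const_nhds
  · intro A₁ h₁ A₂ h₂ x x₀ hbdd hrel
    simpa using (h₁ x x₀ hbdd hrel).add (h₂ x x₀ hbdd hrel)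
  · intro c A₁ h₁ x x₀ hbdd hrel
    simpa using (h₁ x x₀ hbdd hrel).const_smul c
end

section
/- Let E_1, …, E_m be Banach lattices and let F be a Banach space. The set of separately M-weakly compact m-linear operators, that is, continuous m-linear operators A : E_1 × ⋯ × E_m → F such that for every k = 1,…,m and all fixed a_i ∈ E_i (i ≠ k), the linear operator x_k ↦ A(a_1,…,a_{k−1},x_k,a_{k+1},…,a_m) sends norm bounded disjoint sequences in E_k to norm null sequences in F, is a closed linear subspace of L(E_1,…,E_m;F). -/
open Filter Topology Bornology

/-- The set of separately M-weakly compact `m`-linear operators from Banach lattices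
`E₁, …, E_m` to a Banach space `F`: for every coordinate `i` and all fixed vectors in the
other coordinates, the associated linear operator `E i → F` sends norm bounded disjoint
sequences to norm null sequences. -/
def SeparatelyMWeaklyCompact {m : ℕ} (E : Fin m → Type*) (F : Type*)
    [∀ i, NormedAddCommGroup (E i)] [∀ i, Lattice (E i)]
    [∀ i, IsOrderedAddMonoid (E i)] [∀ i, HasSolidNorm (E i)] [∀ i, NormedSpace ℝ (E i)]
    [NormedAddCommGroup F] [NormedSpace ℝ F] : Set (ContinuousMultilinearMap ℝ E F) :=
  {A | ∀ (i : Fin m) (a : ∀ j, E j) (x : ℕ → E i), IsBounded (Set.range x) →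
    (∀ j k, j ≠ k → |x j| ⊓ |x k| = 0) →
    Tendsto (fun n => ‖A.toContinuousLinearMap a i (x n)‖) atTop (nhds 0)}

/-!
For fixed `i`, `a` and bounded `x`, the evaluations `A ↦ A (update a i (x n))` are continuous
linear maps on `L(E₁,…,E_m;F)` with uniformly bounded norms, hence an equicontinuous family, so
the `A` along which they tend to `0` form a closed subspace. The separately M-weakly compact
operators are an intersection of such subspaces.
-/

section TendstoZero

variable {ι 𝕜 X F : Type*} [NontriviallyNormedField 𝕜]
  [SeminormedAddCommGroup X] [NormedSpace 𝕜 X] [SeminormedAddCommGroup F] [NormedSpace 𝕜 F]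

def tendstoZeroSubmodule (T : ι → X →L[𝕜] F) (l : Filter ι) : Submodule 𝕜 X where
  carrier := {x | Tendsto (T · x) l (𝓝 0)}
  add_mem' {x y} hx hy := by simpa using hx.add hy
  zero_mem' := by simpa using tendsto_const_nhds
  smul_mem' c x hx := by simpa using hx.const_smul c

theorem isClosed_tendstoZeroSubmodule {T : ι → X →L[𝕜] F} (hT : BddAbove (Set.range (‖T ·‖)))
    (l : Filter ι) : IsClosed (tendstoZeroSubmodule T l : Set X) :=
  Equicontinuous.isClosed_setOfPred_tendsto (((NormedSpace.equicontinuous_TFAE T).out 7 1).mp hT)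
    continuous_const

end TendstoZero

namespace ContinuousMultilinearMap

variable {𝕜 ι κ G : Type*} {E : κ → Type*} [NontriviallyNormedField 𝕜] [Fintype κ]
  [∀ j, SeminormedAddCommGroup (E j)] [∀ j, NormedSpace 𝕜 (E j)]
  [SeminormedAddCommGroup G] [NormedSpace 𝕜 G]

theorem bddAbove_norm_apply {v : ι → ∀ j, E j} (hv : IsBounded (Set.range v)) :
    BddAbove (Set.range fun n => ‖apply 𝕜 E G (v n)‖) := by
  obtain ⟨b, hb⟩ := isBounded_iff_forall_norm_le.mp hv
  refine ⟨b ^ Fintype.card κ, ?_⟩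
  rintro _ ⟨n, rfl⟩
  have hvn : ‖v n‖ ≤ b := hb _ ⟨n, rfl⟩
  refine ContinuousLinearMap.opNorm_le_bound _ (pow_nonneg ((norm_nonneg _).trans hvn) _)
    fun A : ContinuousMultilinearMap 𝕜 E G => ?_
  simpa [mul_comm] using A.le_opNorm_mul_pow_card_of_le hvn

end ContinuousMultilinearMap

theorem isBounded_range_update {ι κ : Type*} [DecidableEq κ] {E : κ → Type*}
    [∀ j, PseudoMetricSpace (E j)] (a : ∀ j, E j) (i : κ) {x : ι → E i}
    (hx : IsBounded (Set.range x)) : IsBounded (Set.range fun n => Function.update a i (x n)) := by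
  refine forall_isBounded_image_eval_iff.mp fun j => ?_
  rw [← Set.range_comp]
  by_cases hji : j = i
  · subst hji
    convert hx using 2
    ext n
    simp
  · refine (isBounded_singleton (x := a j)).subset (Set.range_subset_iff.mpr fun n => ?_)
    simp [Function.update_of_ne hji]

section SeparatelyMWeaklyCompact

variable {m : ℕ} (E : Fin m → Type*) (F : Type*)
  [∀ i, NormedAddCommGroup (E i)] [∀ i, Lattice (E i)] [∀ i, NormedSpace ℝ (E i)]
  [NormedAddCommGroup F] [NormedSpace ℝ F]

noncomputable def separatelyMWeaklyCompactSubmodule :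
    Submodule ℝ (ContinuousMultilinearMap ℝ E F) :=
  ⨅ (i : Fin m) (a : ∀ j, E j) (x : ℕ → E i) (_ : IsBounded (Set.range x))
    (_ : ∀ j k, j ≠ k → |x j| ⊓ |x k| = 0),
    tendstoZeroSubmodule
      (fun n => ContinuousMultilinearMap.apply ℝ E F (Function.update a i (x n))) atTop

theorem coe_separatelyMWeaklyCompactSubmodule
    [∀ i, IsOrderedAddMonoid (E i)] [∀ i, HasSolidNorm (E i)] :
    (separatelyMWeaklyCompactSubmodule E F : Set (ContinuousMultilinearMap ℝ E F)) =
      SeparatelyMWeaklyCompact E F := by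
  ext A
  simp [separatelyMWeaklyCompactSubmodule, SeparatelyMWeaklyCompact, tendstoZeroSubmodule,
    tendsto_zero_iff_norm_tendsto_zero]

theorem isClosed_separatelyMWeaklyCompactSubmodule :
    IsClosed (separatelyMWeaklyCompactSubmodule E F : Set (ContinuousMultilinearMap ℝ E F)) := by
  simp only [separatelyMWeaklyCompactSubmodule, Submodule.coe_iInf]
  refine isClosed_iInter fun i => isClosed_iInter fun a => isClosed_iInter fun x =>
    isClosed_iInter fun hx => isClosed_iInter fun _ => isClosed_tendstoZeroSubmodule ?_ _
  exact ContinuousMultilinearMap.bddAbove_norm_apply (isBounded_range_update a i hx)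

end SeparatelyMWeaklyCompact

theorem stmt14_general {m : ℕ} (E : Fin m → Type*) (F : Type*)
    [∀ i, NormedAddCommGroup (E i)] [∀ i, Lattice (E i)]
    [∀ i, IsOrderedAddMonoid (E i)] [∀ i, HasSolidNorm (E i)] [∀ i, NormedSpace ℝ (E i)]
    [NormedAddCommGroup F] [NormedSpace ℝ F] :
    IsClosed (SeparatelyMWeaklyCompact E F) ∧
      (0 : ContinuousMultilinearMap ℝ E F) ∈ SeparatelyMWeaklyCompact E F ∧
      (∀ A₁ ∈ SeparatelyMWeaklyCompact E F, ∀ A₂ ∈ SeparatelyMWeaklyCompact E F,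
        A₁ + A₂ ∈ SeparatelyMWeaklyCompact E F) ∧
      (∀ (c : ℝ), ∀ A ∈ SeparatelyMWeaklyCompact E F,
        c • A ∈ SeparatelyMWeaklyCompact E F) := by
  rw [← coe_separatelyMWeaklyCompactSubmodule]
  set S := separatelyMWeaklyCompactSubmodule E F
  exact ⟨isClosed_separatelyMWeaklyCompactSubmodule E F, S.zero_mem,
    fun _ h₁ _ h₂ => S.add_mem h₁ h₂, fun c _ h => S.smul_mem c h⟩

/-- For Banach lattices `E₁, …, E_m` and a Banach space `F`, the set of separately M-weakly
compact `m`-linear operators is a closed linear subspace of `L(E₁,…,E_m;F)`. -/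
theorem stmt14 {m : ℕ} (E : Fin m → Type*) (F : Type*)
    [∀ i, NormedAddCommGroup (E i)] [∀ i, Lattice (E i)]
    [∀ i, IsOrderedAddMonoid (E i)] [∀ i, HasSolidNorm (E i)] [∀ i, NormedSpace ℝ (E i)]
    [∀ i, CompleteSpace (E i)]
    [NormedAddCommGroup F] [NormedSpace ℝ F] [CompleteSpace F] :
    IsClosed (SeparatelyMWeaklyCompact E F) ∧
      (0 : ContinuousMultilinearMap ℝ E F) ∈ SeparatelyMWeaklyCompact E F ∧
      (∀ A₁ ∈ SeparatelyMWeaklyCompact E F, ∀ A₂ ∈ SeparatelyMWeaklyCompact E F,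
        A₁ + A₂ ∈ SeparatelyMWeaklyCompact E F) ∧
      (∀ (c : ℝ), ∀ A ∈ SeparatelyMWeaklyCompact E F,
        c • A ∈ SeparatelyMWeaklyCompact E F) :=
  stmt14_general E F
end

section
/- Let E_1, …, E_m be Banach spaces and let F be a Banach lattice. The set of separately L-weakly compact m-linear operators, that is, continuous m-linear operators A : E_1 × ⋯ × E_m → F such that for every k = 1,…,m and all fixed a_i ∈ E_i (i ≠ k), the bounded linear operator x_k ↦ A(a_1,…,a_{k−1},x_k,a_{k+1},…,a_m) maps the closed unit ball of E_k onto an L-weakly compact subset of F, is a closed linear subspace of L(E_1,…,E_m;F). -/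
open Filter Topology Bornology

/-- A norm bounded subset `A` of a Banach lattice is L-weakly compact if every disjoint
sequence in `sol(A) = {x : |x| ≤ |y| for some y ∈ A}` is norm null. -/
def IsLWeaklyCompactSet'' {F : Type*} [NormedAddCommGroup F] [Lattice F] [IsOrderedAddMonoid F] [HasSolidNorm F] (A : Set F) : Prop :=
  IsBounded A ∧
    ∀ x : ℕ → F, (∀ n, ∃ y ∈ A, |x n| ≤ |y|) →
      (∀ i j, i ≠ j → |x i| ⊓ |x j| = 0) →
      Tendsto (fun n => ‖x n‖) atTop (nhds 0)

/-- The set of separately L-weakly compact `m`-linear operators from Banach spaces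
`E₁, …, E_m` to a Banach lattice `F`: for every coordinate `i` and all fixed vectors in the
other coordinates, the associated linear operator `E i → F` maps the closed unit ball of
`E i` onto an L-weakly compact subset of `F`. -/
def SeparatelyLWeaklyCompact {m : ℕ} (E : Fin m → Type*) (F : Type*)
    [∀ i, NormedAddCommGroup (E i)] [∀ i, NormedSpace ℝ (E i)]
    [NormedAddCommGroup F] [Lattice F] [IsOrderedAddMonoid F] [HasSolidNorm F] [NormedSpace ℝ F] : Set (ContinuousMultilinearMap ℝ E F) :=
  {A | ∀ (i : Fin m) (a : ∀ j, E j),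
    IsLWeaklyCompactSet'' (⇑(A.toContinuousLinearMap a i) '' Metric.closedBall (0 : E i) 1)}

/-!
If `|x| ≤ |t + w|` then `|x| ≤ |x| ⊓ |t| + |x| ⊓ |w|`, and the two pieces lie in the solid
hulls of `{t}` and `{w}` and are dominated by `|x|`, so they inherit disjointness from a
disjoint sequence `(x n)`. Hence a sum of two L-weakly compact sets is L-weakly compact, and so
is a bounded set lying within `ε` of an L-weakly compact set for every `ε > 0`. It follows that
the operators `T : E →L[ℝ] F` mapping the unit ball to an L-weakly compact set form a closed
subspace; since the order of `F` is not assumed compatible with real scalars, `c • T` is handled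
through `T '' closedBall 0 n = n • T '' closedBall 0 1`. The separately L-weakly compact
multilinear maps are the intersection of the preimages of this subspace under the continuous
linear maps `A ↦ A.toContinuousLinearMap a i`.
-/

open Pointwise Metric

section LatticeOrderedGroup

variable {α : Type*} [AddCommGroup α] [Lattice α] [IsOrderedAddMonoid α]

lemma inf_add_le_inf_add_inf {a b c : α} (ha : 0 ≤ a) (hb : 0 ≤ b) (hc : 0 ≤ c) :
    c ⊓ (a + b) ≤ c ⊓ a + c ⊓ b := by
  rw [add_inf, inf_add, inf_add]
  exact le_inf (le_inf (inf_le_left.trans (le_add_of_nonneg_left hc))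
      (inf_le_left.trans (le_add_of_nonneg_left ha)))
    (le_inf (inf_le_left.trans (le_add_of_nonneg_right hb)) inf_le_right)

lemma abs_abs_inf_abs (a b : α) : |(|a| ⊓ |b|)| = |a| ⊓ |b| :=
  abs_of_nonneg (le_inf (abs_nonneg a) (abs_nonneg b))

lemma abs_inf_eq_zero_of_abs_le {x u : ℕ → α} (hle : ∀ n, |u n| ≤ |x n|)
    (hx : ∀ i j, i ≠ j → |x i| ⊓ |x j| = 0) : ∀ i j, i ≠ j → |u i| ⊓ |u j| = 0 := fun i j hij =>
  le_antisymm ((inf_le_inf (hle i) (hle j)).trans (hx i j hij).le)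
    (le_inf (abs_nonneg _) (abs_nonneg _))

end LatticeOrderedGroup

section SolidNorm

variable {F : Type*} [NormedAddCommGroup F] [Lattice F] [IsOrderedAddMonoid F] [HasSolidNorm F]

lemma norm_le_norm_abs_inf_add_norm_abs_inf {x t w : F} (h : |x| ≤ |t + w|) :
    ‖x‖ ≤ ‖|x| ⊓ |t|‖ + ‖|x| ⊓ |w|‖ := by
  have hsplit : |x| ≤ |x| ⊓ |t| + |x| ⊓ |w| :=
    (le_inf le_rfl (h.trans (abs_add_le t w))).trans
      (inf_add_le_inf_add_inf (abs_nonneg t) (abs_nonneg w) (abs_nonneg x))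
  calc ‖x‖ ≤ ‖|x| ⊓ |t| + |x| ⊓ |w|‖ := by
        refine norm_le_norm_of_abs_le_abs (hsplit.trans_eq (abs_of_nonneg ?_).symm)
        exact add_nonneg (le_inf (abs_nonneg x) (abs_nonneg t))
          (le_inf (abs_nonneg x) (abs_nonneg w))
    _ ≤ ‖|x| ⊓ |t|‖ + ‖|x| ⊓ |w|‖ := norm_add_le _ _

lemma isLWeaklyCompactSet''_zero : IsLWeaklyCompactSet'' ({0} : Set F) := by
  refine ⟨isBounded_singleton, fun x hx _ => ?_⟩
  have hx0 : ∀ n, ‖x n‖ = 0 := fun n => by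
    obtain ⟨y, rfl, hxy⟩ := hx n
    simpa using norm_le_norm_of_abs_le_abs hxy
  simp [hx0]

namespace IsLWeaklyCompactSet''

lemma mono {S T : Set F} (hT : IsLWeaklyCompactSet'' T) (hST : S ⊆ T) :
    IsLWeaklyCompactSet'' S :=
  ⟨hT.1.subset hST, fun x hx hd =>
    hT.2 x (fun n => (hx n).imp fun _ hy => ⟨hST hy.1, hy.2⟩) hd⟩

lemma tendsto_norm_abs_inf {T : Set F} (hT : IsLWeaklyCompactSet'' T) {x t : ℕ → F}
    (ht : ∀ n, t n ∈ T) (hx : ∀ i j, i ≠ j → |x i| ⊓ |x j| = 0) :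
    Tendsto (fun n => ‖|x n| ⊓ |t n|‖) atTop (𝓝 0) := by
  refine hT.2 _ (fun n => ⟨t n, ht n, (abs_abs_inf_abs _ _).trans_le inf_le_right⟩) ?_
  exact abs_inf_eq_zero_of_abs_le (fun n => (abs_abs_inf_abs _ _).trans_le inf_le_left) hx

lemma add {T₁ T₂ : Set F} (h₁ : IsLWeaklyCompactSet'' T₁) (h₂ : IsLWeaklyCompactSet'' T₂) :
    IsLWeaklyCompactSet'' (T₁ + T₂) := by
  refine ⟨h₁.1.add h₂.1, fun x hx hd => ?_⟩
  choose y hy hxy using hx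
  choose t ht w hw htw using fun n => Set.mem_add.1 (hy n)
  refine squeeze_zero (fun n => norm_nonneg _) (fun n => ?_)
    (by simpa using (h₁.tendsto_norm_abs_inf ht hd).add (h₂.tendsto_norm_abs_inf hw hd))
  exact norm_le_norm_abs_inf_add_norm_abs_inf ((hxy n).trans_eq (by rw [htw]))

lemma nsmul {S : Set F} (h : IsLWeaklyCompactSet'' S) (n : ℕ) :
    IsLWeaklyCompactSet'' (n • S) := by
  induction n with
  | zero => rw [zero_nsmul, ← Set.singleton_zero]; exact isLWeaklyCompactSet''_zero
  | succ n ih => simpa only [succ_nsmul] using ih.add h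

lemma of_forall_subset_add_closedBall {S : Set F} (hS : IsBounded S)
    (h : ∀ ε > 0, ∃ T, IsLWeaklyCompactSet'' T ∧ S ⊆ T + closedBall 0 ε) :
    IsLWeaklyCompactSet'' S := by
  refine ⟨hS, fun x hx hd => Metric.tendsto_atTop.2 fun ε hε => ?_⟩
  obtain ⟨T, hT, hST⟩ := h (ε / 2) (half_pos hε)
  choose y hy hxy using hx
  choose t ht w hw htw using fun n => Set.mem_add.1 (hST (hy n))
  obtain ⟨N, hN⟩ :=
    Metric.tendsto_atTop.1 (hT.tendsto_norm_abs_inf ht hd) (ε / 2) (half_pos hε)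
  refine ⟨N, fun n hn => ?_⟩
  have hu := hN n hn
  have hv : ‖|x n| ⊓ |w n|‖ ≤ ε / 2 :=
    (norm_le_norm_of_abs_le_abs ((abs_abs_inf_abs _ _).trans_le inf_le_right)).trans
      (mem_closedBall_zero_iff.1 (hw n))
  rw [dist_zero_right, norm_norm] at hu ⊢
  calc ‖x n‖ ≤ ‖|x n| ⊓ |t n|‖ + ‖|x n| ⊓ |w n|‖ :=
        norm_le_norm_abs_inf_add_norm_abs_inf ((hxy n).trans_eq (by rw [htw]))
    _ < ε := by linarith

end IsLWeaklyCompactSet''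

end SolidNorm

lemma closedBall_zero_natCast_eq_nsmul {E : Type*} [NormedAddCommGroup E] [NormedSpace ℝ E]
    (n : ℕ) : closedBall (0 : E) n = n • closedBall 0 1 := by
  induction n with
  | zero => simp [Set.singleton_zero]
  | succ n ih =>
    rw [succ_nsmul, ← ih, Nat.cast_succ, ← smul_unitClosedBall_of_nonneg (by positivity),
      (convex_closedBall 0 1).add_smul n.cast_nonneg zero_le_one, one_smul,
      smul_unitClosedBall_of_nonneg n.cast_nonneg]

section Operators

variable {E F : Type*} [NormedAddCommGroup E] [NormedSpace ℝ E]
  [NormedAddCommGroup F] [Lattice F] [IsOrderedAddMonoid F] [HasSolidNorm F] [NormedSpace ℝ F]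

lemma IsLWeaklyCompactSet''.image_closedBall {T : E →L[ℝ] F}
    (hT : IsLWeaklyCompactSet'' (T '' closedBall 0 1)) (r : ℝ) :
    IsLWeaklyCompactSet'' (T '' closedBall 0 r) := by
  refine IsLWeaklyCompactSet''.mono ?_
    (Set.image_mono (closedBall_subset_closedBall (Nat.le_ceil r)))
  rw [closedBall_zero_natCast_eq_nsmul, Set.image_nsmul]
  exact hT.nsmul _

variable (E F) in
def lWeaklyCompactOperators : Submodule ℝ (E →L[ℝ] F) where
  carrier := {T | IsLWeaklyCompactSet'' (T '' closedBall 0 1)}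
  zero_mem' := isLWeaklyCompactSet''_zero.mono (by rintro _ ⟨e, -, rfl⟩; rfl)
  add_mem' {T U} hT hU := (IsLWeaklyCompactSet''.add hT hU).mono <| by
    rintro _ ⟨e, he, rfl⟩
    exact Set.add_mem_add ⟨e, he, rfl⟩ ⟨e, he, rfl⟩
  smul_mem' c T hT := (IsLWeaklyCompactSet''.image_closedBall hT ‖c‖).mono <| by
    rintro _ ⟨e, he, rfl⟩
    refine ⟨c • e, ?_, map_smul T c e⟩
    rw [← smul_unitClosedBall]
    exact Set.smul_mem_smul_set he

lemma isClosed_lWeaklyCompactOperators :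
    IsClosed (lWeaklyCompactOperators E F : Set (E →L[ℝ] F)) := by
  refine isClosed_of_closure_subset fun T hT => ?_
  refine IsLWeaklyCompactSet''.of_forall_subset_add_closedBall
    (T.lipschitz.isBounded_image isBounded_closedBall) fun ε hε => ?_
  obtain ⟨U, hU, hTU⟩ := Metric.mem_closure_iff.1 hT ε hε
  refine ⟨_, hU, ?_⟩
  rintro _ ⟨e, he, rfl⟩
  refine Set.mem_add.2 ⟨U e, ⟨e, he, rfl⟩, (T - U) e, ?_, by simp⟩
  rw [mem_closedBall_zero_iff] at he ⊢
  calc ‖(T - U) e‖ ≤ ε * ‖e‖ := (T - U).le_of_opNorm_le (dist_eq_norm T U ▸ hTU.le) e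
    _ ≤ ε := mul_le_of_le_one_right hε.le he

end Operators

namespace ContinuousMultilinearMap

variable {𝕜 ι G : Type*} [NontriviallyNormedField 𝕜] [Fintype ι] [DecidableEq ι]
  {E : ι → Type*} [∀ i, NormedAddCommGroup (E i)] [∀ i, NormedSpace 𝕜 (E i)]
  [NormedAddCommGroup G] [NormedSpace 𝕜 G]

lemma norm_toContinuousLinearMap_le (A : ContinuousMultilinearMap 𝕜 E G) (a : ∀ i, E i)
    (i : ι) :
    ‖A.toContinuousLinearMap a i‖ ≤ (∏ j ∈ Finset.univ \ {i}, ‖a j‖) * ‖A‖ := by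
  refine ContinuousLinearMap.opNorm_le_bound _ (by positivity) fun e => ?_
  have hprod : ∏ j, ‖Function.update a i e j‖ = ‖e‖ * ∏ j ∈ Finset.univ \ {i}, ‖a j‖ := by
    simp only [Function.apply_update (fun _ => norm),
      Finset.prod_update_of_mem (Finset.mem_univ i)]
  calc ‖A (Function.update a i e)‖ ≤ ‖A‖ * ∏ j, ‖Function.update a i e j‖ := A.le_opNorm _
    _ = (∏ j ∈ Finset.univ \ {i}, ‖a j‖) * ‖A‖ * ‖e‖ := by rw [hprod]; ring

noncomputable def toContinuousLinearMapL (a : ∀ i, E i) (i : ι) :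
    ContinuousMultilinearMap 𝕜 E G →L[𝕜] E i →L[𝕜] G :=
  LinearMap.mkContinuous
    { toFun := fun A => A.toContinuousLinearMap a i
      map_add' := fun A B => by ext; simp
      map_smul' := fun c A => by ext; simp }
    (∏ j ∈ Finset.univ \ {i}, ‖a j‖) fun A => A.norm_toContinuousLinearMap_le a i

end ContinuousMultilinearMap

open ContinuousMultilinearMap in
lemma separatelyLWeaklyCompact_eq_iInter_preimage {m : ℕ} (E : Fin m → Type*) (F : Type*)
    [∀ i, NormedAddCommGroup (E i)] [∀ i, NormedSpace ℝ (E i)]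
    [NormedAddCommGroup F] [Lattice F] [IsOrderedAddMonoid F] [HasSolidNorm F] [NormedSpace ℝ F] :
    SeparatelyLWeaklyCompact E F =
      ⋂ i, ⋂ a, toContinuousLinearMapL a i ⁻¹' lWeaklyCompactOperators (E i) F := by
  ext A
  simp only [Set.mem_iInter, Set.mem_preimage]
  rfl

theorem stmt15_general {m : ℕ} (E : Fin m → Type*) (F : Type*)
    [∀ i, NormedAddCommGroup (E i)] [∀ i, NormedSpace ℝ (E i)]
    [NormedAddCommGroup F] [Lattice F] [IsOrderedAddMonoid F] [HasSolidNorm F] [NormedSpace ℝ F] :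
    IsClosed (SeparatelyLWeaklyCompact E F) ∧
      (0 : ContinuousMultilinearMap ℝ E F) ∈ SeparatelyLWeaklyCompact E F ∧
      (∀ A₁ ∈ SeparatelyLWeaklyCompact E F, ∀ A₂ ∈ SeparatelyLWeaklyCompact E F,
        A₁ + A₂ ∈ SeparatelyLWeaklyCompact E F) ∧
      (∀ (c : ℝ), ∀ A ∈ SeparatelyLWeaklyCompact E F,
        c • A ∈ SeparatelyLWeaklyCompact E F) := by
  simp only [separatelyLWeaklyCompact_eq_iInter_preimage, Set.mem_iInter, Set.mem_preimage,
    SetLike.mem_coe, map_zero, map_add, map_smul]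
  refine ⟨isClosed_iInter fun i => isClosed_iInter fun a =>
      isClosed_lWeaklyCompactOperators.preimage (map_continuous _),
    fun i a => zero_mem _, fun A₁ h₁ A₂ h₂ i a => add_mem (h₁ i a) (h₂ i a),
    fun c A h i a => Submodule.smul_mem _ c (h i a)⟩

/-- For Banach spaces `E₁, …, E_m` and a Banach lattice `F`, the set of separately L-weakly
compact `m`-linear operators is a closed linear subspace of `L(E₁,…,E_m;F)`. -/
theorem stmt15 {m : ℕ} (E : Fin m → Type*) (F : Type*)
    [∀ i, NormedAddCommGroup (E i)] [∀ i, NormedSpace ℝ (E i)] [∀ i, CompleteSpace (E i)]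
    [NormedAddCommGroup F] [Lattice F] [IsOrderedAddMonoid F] [HasSolidNorm F] [NormedSpace ℝ F] [CompleteSpace F] :
    IsClosed (SeparatelyLWeaklyCompact E F) ∧
      (0 : ContinuousMultilinearMap ℝ E F) ∈ SeparatelyLWeaklyCompact E F ∧
      (∀ A₁ ∈ SeparatelyLWeaklyCompact E F, ∀ A₂ ∈ SeparatelyLWeaklyCompact E F,
        A₁ + A₂ ∈ SeparatelyLWeaklyCompact E F) ∧
      (∀ (c : ℝ), ∀ A ∈ SeparatelyLWeaklyCompact E F,
        c • A ∈ SeparatelyLWeaklyCompact E F) :=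
  stmt15_general E F
end

section
/- Let E_1, …, E_m, F be Banach spaces, let 𝒞(E_1), …, 𝒞(E_m) be injective classes of linear operators on E_1, …, E_m respectively, let 𝒟(F) be a surjective class of linear operators on F, and let 𝒩 be an m-semi-ideal. Then the set 𝒟(F)∘𝒩∘(𝒞(E_1),…,𝒞(E_m)) of all continuous m-linear operators A : E_1 × ⋯ × E_m → F for which there exist Banach spaces G_0, G_1, …, G_m, linear operators S_i ∈ 𝒞(E_i, G_i) for i = 1,…,m, S_0 ∈ 𝒟(G_0, F), and an m-linear operator B ∈ 𝒩(G_1,…,G_m;G_0) with A = S_0 ∘ B ∘ (S_1,…,S_m), is a closed linear subspace of L(E_1,…,E_m;F). -/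
open Filter Topology

universe u

/-- A bundled Banach space. -/
structure BanachSp : Type (u + 1) where
  carrier : Type u
  [nacg : NormedAddCommGroup carrier]
  [nsp : NormedSpace ℝ carrier]
  [cs : CompleteSpace carrier]

attribute [instance] BanachSp.nacg BanachSp.nsp BanachSp.cs

/-- An injective class of linear operators on a Banach space `E`: to each Banach space `G`
it assigns a closed linear subspace of `L(E,G)`, stable under composition with injective
operators on the left. -/
structure InjClass (E : Type u) [NormedAddCommGroup E] [NormedSpace ℝ E] [CompleteSpace E] :
    Type (u + 1) where
  mem : ∀ G : BanachSp.{u}, Set (E →L[ℝ] G.carrier)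
  isClosed : ∀ G, IsClosed (mem G)
  zero_mem : ∀ G, (0 : E →L[ℝ] G.carrier) ∈ mem G
  add_mem : ∀ G, ∀ f ∈ mem G, ∀ g ∈ mem G, f + g ∈ mem G
  smul_mem : ∀ (G) (c : ℝ), ∀ f ∈ mem G, c • f ∈ mem G
  comp_inj : ∀ (G H : BanachSp.{u}), ∀ T ∈ mem G, ∀ I : G.carrier →L[ℝ] H.carrier,
    Function.Injective I → I.comp T ∈ mem H

/-- A surjective class of linear operators into a Banach space `F`: to each Banach space `G`
it assigns a closed linear subspace of `L(G,F)`, stable under composition with surjective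
operators on the right. -/
structure SurjClass (F : Type u) [NormedAddCommGroup F] [NormedSpace ℝ F] [CompleteSpace F] :
    Type (u + 1) where
  mem : ∀ G : BanachSp.{u}, Set (G.carrier →L[ℝ] F)
  isClosed : ∀ G, IsClosed (mem G)
  zero_mem : ∀ G, (0 : G.carrier →L[ℝ] F) ∈ mem G
  add_mem : ∀ G, ∀ f ∈ mem G, ∀ g ∈ mem G, f + g ∈ mem G
  smul_mem : ∀ (G) (c : ℝ), ∀ f ∈ mem G, c • f ∈ mem G
  comp_surj : ∀ (G H : BanachSp.{u}), ∀ T ∈ mem G, ∀ P : H.carrier →L[ℝ] G.carrier,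
    Function.Surjective P → T.comp P ∈ mem H

/-- An `m`-semi-ideal: a class of continuous `m`-linear operators between Banach spaces whose
components are closed linear subspaces, stable under composition with surjective operators in
each variable and an injective operator on the left. -/
structure MSemiIdeal (m : ℕ) : Type (u + 1) where
  mem : ∀ (G : Fin m → BanachSp.{u}) (G₀ : BanachSp.{u}),
    Set (ContinuousMultilinearMap ℝ (fun i => (G i).carrier) G₀.carrier)
  isClosed : ∀ G G₀, IsClosed (mem G G₀)
  zero_mem : ∀ G G₀, 0 ∈ mem G G₀
  add_mem : ∀ G G₀, ∀ A ∈ mem G G₀, ∀ B ∈ mem G G₀, A + B ∈ mem G G₀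
  smul_mem : ∀ (G G₀) (c : ℝ), ∀ A ∈ mem G G₀, c • A ∈ mem G G₀
  comp_mem : ∀ (G : Fin m → BanachSp.{u}) (G₀ : BanachSp.{u}), ∀ A ∈ mem G G₀,
    ∀ (H : Fin m → BanachSp.{u}) (H₀ : BanachSp.{u})
      (uu : ∀ i, (H i).carrier →L[ℝ] (G i).carrier), (∀ i, Function.Surjective (uu i)) →
      ∀ t : G₀.carrier →L[ℝ] H₀.carrier, Function.Injective t →
        t.compContinuousMultilinearMap (A.compContinuousLinearMap uu) ∈ mem H H₀

/-- The set of `m`-linear operators `A : E₁ × ⋯ × E_m → F` factoring as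
`A = S₀ ∘ B ∘ (S₁,…,S_m)` with `S_i` in the injective class `C i`, `B` in the `m`-semi-ideal
`N` and `S₀` in the surjective class `D`. -/
def FactorableOperators {m : ℕ} (E : Fin m → BanachSp.{u}) (F : BanachSp.{u})
    (C : ∀ i, InjClass.{u} (E i).carrier) (D : SurjClass.{u} F.carrier)
    (N : MSemiIdeal.{u} m) :
    Set (ContinuousMultilinearMap ℝ (fun i => (E i).carrier) F.carrier) :=
  {A | ∃ (G₀ : BanachSp.{u}) (G : Fin m → BanachSp.{u})
      (S₀ : G₀.carrier →L[ℝ] F.carrier) (S : ∀ i, (E i).carrier →L[ℝ] (G i).carrier)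
      (B : ContinuousMultilinearMap ℝ (fun i => (G i).carrier) G₀.carrier),
      S₀ ∈ D.mem G₀ ∧ (∀ i, S i ∈ (C i).mem (G i)) ∧ B ∈ N.mem G G₀ ∧
      ∀ x : ∀ i, (E i).carrier, A x = S₀ (B fun i => S i (x i))}

/-!
Linearity: the sum of two factorizations factors through the direct sums of the intermediate
spaces. Closedness: renorming the intermediate spaces (`G i` as the quotient of `E i × G i` by the
kernel of `(x, g) ↦ S i x + θ • g`, and `G₀` by `g ↦ max (τ‖g‖) ‖S₀ g‖`) gives every factorable
`A` a factorization with `‖S₀‖, ‖S i‖ ≤ 1` and `‖B‖ ≤ 2 ^ m * ‖A‖ + δ`. A limit point `A` is the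
sum of a rapidly convergent series of factorable operators `Aₙ`; after rescaling, their
factorizations have summable norms, and `A` factors through the `ℓ∞`-sums of the intermediate
spaces, each factor being a norm-convergent series of operators in the corresponding closed class.
-/

open scoped ENNReal

theorem ContinuousMultilinearMap.opNorm_le_of_forall_norm_le_one {ι : Type*} [Fintype ι]
    {X : ι → Type*} {Y : Type*} [∀ i, NormedAddCommGroup (X i)] [∀ i, NormedSpace ℝ (X i)]
    [NormedAddCommGroup Y] [NormedSpace ℝ Y] (f : ContinuousMultilinearMap ℝ X Y) {c : ℝ}
    (hc : 0 ≤ c) (h : ∀ x : ∀ i, X i, (∀ i, ‖x i‖ ≤ 1) → ‖f x‖ ≤ c) : ‖f‖ ≤ c := by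
  refine f.opNorm_le_bound hc fun x => ?_
  by_cases hx : ∀ i, x i ≠ 0
  swap
  · obtain ⟨i, hi⟩ := not_forall.mp hx
    simpa [f.map_coord_zero i (not_not.mp hi)] using mul_nonneg hc (by positivity)
  have hpos : ∀ i, ‖x i‖ ≠ 0 := fun i => norm_ne_zero_iff.mpr (hx i)
  calc ‖f x‖ = ‖f fun i => ‖x i‖ • (‖x i‖⁻¹ • x i)‖ := by
        simp only [smul_smul, mul_inv_cancel₀ (hpos _), one_smul]
    _ = (∏ i, ‖x i‖) * ‖f fun i => ‖x i‖⁻¹ • x i‖ := by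
        rw [f.map_smul_univ, norm_smul, Real.norm_of_nonneg (by positivity)]
    _ ≤ (∏ i, ‖x i‖) * c := by
        gcongr
        refine h _ fun i => ?_
        rw [norm_smul, norm_inv, norm_norm, inv_mul_cancel₀ (hpos i)]
    _ = c * ∏ i, ‖x i‖ := mul_comm _ _

theorem tsum_mem_of_isClosed {α ι : Type*} [AddCommMonoid α] [TopologicalSpace α] {s : Set α}
    (hs : IsClosed s) (h0 : (0 : α) ∈ s) (hadd : ∀ a ∈ s, ∀ b ∈ s, a + b ∈ s) {f : ι → α}
    (hf : ∀ i, f i ∈ s) : ∑' i, f i ∈ s :=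
  tsum_mem (s := ({ carrier := s, add_mem' := fun ha hb => hadd _ ha _ hb, zero_mem' := h0 } :
    AddSubmonoid α)) hs hf

theorem ContinuousLinearMap.tsum_apply {ι X Y : Type*} [NormedAddCommGroup X] [NormedSpace ℝ X]
    [NormedAddCommGroup Y] [NormedSpace ℝ Y] {T : ι → X →L[ℝ] Y} (hT : Summable T) (x : X) :
    (∑' n, T n) x = ∑' n, T n x :=
  (ContinuousLinearMap.apply ℝ Y x).map_tsum hT

theorem ContinuousMultilinearMap.tsum_apply {ι κ : Type*} [Fintype κ] {X : κ → Type*} {Y : Type*}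
    [∀ i, NormedAddCommGroup (X i)] [∀ i, NormedSpace ℝ (X i)] [NormedAddCommGroup Y]
    [NormedSpace ℝ Y] {T : ι → ContinuousMultilinearMap ℝ X Y} (hT : Summable T) (x : ∀ i, X i) :
    (∑' n, T n) x = ∑' n, T n x :=
  (ContinuousMultilinearMap.apply ℝ X Y x).map_tsum hT

namespace lp

variable {α : Type*} {V : α → Type*} [∀ n, NormedAddCommGroup (V n)] [∀ n, NormedSpace ℝ (V n)]

theorem norm_evalCLM_le (n : α) : ‖evalCLM ℝ V ∞ n‖ ≤ 1 :=
  LinearMap.mkContinuous_norm_le _ zero_le_one _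

theorem summable_comp_evalCLM {Z : Type*} [NormedAddCommGroup Z] [NormedSpace ℝ Z]
    [CompleteSpace Z] {T : ∀ n, V n →L[ℝ] Z} (hT : Summable fun n => ‖T n‖) :
    Summable fun n => (T n).comp (evalCLM ℝ V ∞ n) :=
  .of_norm_bounded hT fun n => (ContinuousLinearMap.opNorm_comp_le _ _).trans
    (mul_le_of_le_one_right (norm_nonneg _) (norm_evalCLM_le n))

variable [DecidableEq α]

theorem norm_singleContinuousLinearMap_le (n : α) : ‖singleContinuousLinearMap ℝ V ∞ n‖ ≤ 1 :=
  ContinuousLinearMap.opNorm_le_bound _ zero_le_one fun x => by simp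

theorem singleContinuousLinearMap_injective (n : α) :
    Function.Injective (singleContinuousLinearMap ℝ V ∞ n) :=
  (isometry_single n).injective

theorem evalCLM_surjective (n : α) : Function.Surjective (evalCLM ℝ V ∞ n) :=
  fun v => ⟨lp.single ∞ n v, lp.single_apply_self ∞ n v⟩

theorem tsum_single_apply {v : ∀ n, V n} (hv : Summable fun n => lp.single ∞ n (v n)) (k : α) :
    (∑' n, lp.single ∞ n (v n)) k = v k := by
  change evalCLM ℝ V ∞ k _ = _
  rw [ContinuousLinearMap.map_tsum _ hv, tsum_eq_single k]
  · exact lp.single_apply_self ∞ k (v k)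
  · intro n hn
    exact Pi.single_eq_of_ne' hn _

section Diagonal

variable [∀ n, CompleteSpace (V n)] {X : Type*} [NormedAddCommGroup X] [NormedSpace ℝ X]
  {T : ∀ n, X →L[ℝ] V n}

theorem summable_single_comp (hT : Summable fun n => ‖T n‖) :
    Summable fun n => (singleContinuousLinearMap ℝ V ∞ n).comp (T n) :=
  .of_norm_bounded hT fun n => (ContinuousLinearMap.opNorm_comp_le _ _).trans
    (mul_le_of_le_one_left (norm_nonneg _) (norm_singleContinuousLinearMap_le n))

theorem tsum_single_comp_apply (hT : Summable fun n => ‖T n‖) (x : X) (k : α) :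
    (∑' n, (singleContinuousLinearMap ℝ V ∞ n).comp (T n)) x k = T k x := by
  rw [ContinuousLinearMap.tsum_apply (summable_single_comp hT)]
  exact tsum_single_apply ((summable_single_comp hT).mapL (ContinuousLinearMap.apply ℝ _ x)) k

variable {κ : Type*} [Fintype κ] {W : κ → α → Type*} [∀ i n, NormedAddCommGroup (W i n)]
  [∀ i n, NormedSpace ℝ (W i n)] {M : ∀ n, ContinuousMultilinearMap ℝ (fun i => W i n) (V n)}

theorem summable_single_compContinuousMultilinearMap (hM : Summable fun n => ‖M n‖) :
    Summable fun n => (singleContinuousLinearMap ℝ V ∞ n).compContinuousMultilinearMap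
      ((M n).compContinuousLinearMap fun i => evalCLM ℝ (W i) ∞ n) := by
  refine .of_norm_bounded hM fun n => ?_
  refine (ContinuousLinearMap.norm_compContinuousMultilinearMap_le _ _).trans
    (mul_le_of_le_one_left (norm_nonneg _) (norm_singleContinuousLinearMap_le n) |>.trans ?_)
  refine ((M n).norm_compContinuousLinearMap_le _).trans
    (mul_le_of_le_one_right (norm_nonneg _) ?_)
  exact Finset.prod_le_one (fun i _ => norm_nonneg _) fun i _ => norm_evalCLM_le n

theorem tsum_single_compContinuousMultilinearMap_apply (hM : Summable fun n => ‖M n‖)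
    (y : ∀ i, lp (W i) ∞) (k : α) :
    (∑' n, (singleContinuousLinearMap ℝ V ∞ n).compContinuousMultilinearMap
      ((M n).compContinuousLinearMap fun i => evalCLM ℝ (W i) ∞ n)) y k = M k fun i => y i k := by
  rw [ContinuousMultilinearMap.tsum_apply (summable_single_compContinuousMultilinearMap hM)]
  exact tsum_single_apply ((summable_single_compContinuousMultilinearMap hM).mapL
    (ContinuousMultilinearMap.apply ℝ _ _ y)) k

end Diagonal

end lp

theorem exists_codomain_renorming {X : Type u} [NormedAddCommGroup X] [NormedSpace ℝ X]
    [CompleteSpace X] (G : BanachSp.{u}) (S : X →L[ℝ] G.carrier) {θ : ℝ} (hθ : 0 < θ) :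
    ∃ (H : BanachSp.{u}) (e : G.carrier ≃L[ℝ] H.carrier),
      ‖(e : G.carrier →L[ℝ] H.carrier).comp S‖ ≤ 1 ∧
      ∀ h : H.carrier, ‖h‖ ≤ 1 →
        ∃ x y, e.symm h = S x + θ • y ∧ ‖x‖ ≤ 2 ∧ ‖y‖ ≤ 2 := by
  let q : X × G.carrier →L[ℝ] G.carrier := S.coprod (θ • ContinuousLinearMap.id ℝ G.carrier)
  have hq : ∀ v, q v = S v.1 + θ • v.2 := fun _ => rfl
  have hq_surj : Function.Surjective q := fun g =>
    ⟨(0, θ⁻¹ • g), by simp [hq, smul_smul, mul_inv_cancel₀ hθ.ne']⟩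
  let K := (q : X × G.carrier →ₗ[ℝ] G.carrier).ker
  have : IsClosed (K : Set (X × G.carrier)) := q.isClosed_ker
  let H : BanachSp.{u} := ⟨(X × G.carrier) ⧸ K⟩
  let φ : H.carrier →L[ℝ] G.carrier := K.liftQL q le_rfl
  have hφ : ∀ v, φ (Submodule.Quotient.mk v) = q v := fun _ => rfl
  let ψ : H.carrier ≃L[ℝ] G.carrier := .ofBijective φ (K.ker_liftQ_eq_bot _ _ le_rfl)
    (LinearMap.range_eq_top.mpr fun g =>
      let ⟨v, hv⟩ := hq_surj g
      ⟨Submodule.Quotient.mk v, hv⟩)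
  refine ⟨H, ψ.symm, ContinuousLinearMap.opNorm_le_bound _ zero_le_one fun x => ?_, fun h hh => ?_⟩
  · have : ψ.symm (S x) = Submodule.Quotient.mk (x, 0) := ψ.symm_apply_eq.mpr (by
      change S x = φ (Submodule.Quotient.mk (x, 0))
      simp [hφ, hq])
    simpa [this] using Submodule.Quotient.norm_mk_le K (x, 0)
  · obtain ⟨v, rfl, hv⟩ := Submodule.Quotient.norm_mk_lt h one_pos
    refine ⟨v.1, v.2, hφ v, ?_, ?_⟩
    · linarith [norm_fst_le v]
    · linarith [norm_snd_le v]

theorem exists_domain_renorming {Z : Type u} [NormedAddCommGroup Z] [NormedSpace ℝ Z]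
    [CompleteSpace Z] (G : BanachSp.{u}) (T : G.carrier →L[ℝ] Z) {τ : ℝ} (hτ : 0 < τ) :
    ∃ (Y : BanachSp.{u}) (e : G.carrier ≃L[ℝ] Y.carrier),
      ‖T.comp (e.symm : Y.carrier →L[ℝ] G.carrier)‖ ≤ 1 ∧
      ∀ g, ‖e g‖ ≤ max (τ * ‖g‖) ‖T g‖ := by
  let j : G.carrier →L[ℝ] G.carrier × Z := (τ • ContinuousLinearMap.id ℝ G.carrier).prod T
  have hj : ∀ g, ‖j g‖ = max (τ * ‖g‖) ‖T g‖ := fun g => by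
    simp [j, Prod.norm_def, norm_smul, abs_of_pos hτ]
  have hj_anti : AntilipschitzWith ⟨τ⁻¹, by positivity⟩ j :=
    j.antilipschitz_of_bound fun g => by
      change ‖g‖ ≤ τ⁻¹ * ‖j g‖
      rw [le_inv_mul_iff₀ hτ, hj]
      exact le_max_left _ _
  have hj_closed : IsClosed (Set.range j) := hj_anti.isClosed_range j.uniformContinuous
  let e := ContinuousLinearMap.equivRange hj_anti.injective hj_closed
  have : CompleteSpace (j : G.carrier →ₗ[ℝ] G.carrier × Z).range := by
    have : IsClosed ((j : G.carrier →ₗ[ℝ] G.carrier × Z).range : Set (G.carrier × Z)) := by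
      rwa [LinearMap.coe_range, ContinuousLinearMap.coe_coe]
    exact IsClosed.completeSpace_coe
  refine ⟨⟨(j : G.carrier →ₗ[ℝ] G.carrier × Z).range⟩, e,
    ContinuousLinearMap.opNorm_le_bound _ zero_le_one fun y => ?_, fun g => (hj g).le⟩
  obtain ⟨g, rfl⟩ := e.surjective y
  rw [one_mul, ContinuousLinearMap.comp_apply, ContinuousLinearEquiv.coe_coe,
    e.symm_apply_apply]
  exact norm_snd_le (j g)

section

variable {m : ℕ} {E : Fin m → BanachSp.{u}} {F : BanachSp.{u}}

structure Factorization (C : ∀ i, InjClass.{u} (E i).carrier) (D : SurjClass.{u} F.carrier)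
    (N : MSemiIdeal.{u} m) (A : ContinuousMultilinearMap ℝ (fun i => (E i).carrier) F.carrier) :
    Type (u + 1) where
  G₀ : BanachSp.{u}
  G : Fin m → BanachSp.{u}
  S₀ : G₀.carrier →L[ℝ] F.carrier
  S : ∀ i, (E i).carrier →L[ℝ] (G i).carrier
  B : ContinuousMultilinearMap ℝ (fun i => (G i).carrier) G₀.carrier
  S₀_mem : S₀ ∈ D.mem G₀
  S_mem : ∀ i, S i ∈ (C i).mem (G i)
  B_mem : B ∈ N.mem G G₀
  apply_eq : ∀ x, A x = S₀ (B fun i => S i (x i))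

variable {C : ∀ i, InjClass.{u} (E i).carrier} {D : SurjClass.{u} F.carrier} {N : MSemiIdeal.{u} m}
  {A A₁ A₂ : ContinuousMultilinearMap ℝ (fun i => (E i).carrier) F.carrier}

theorem mem_factorableOperators_iff :
    A ∈ FactorableOperators E F C D N ↔ Nonempty (Factorization C D N A) :=
  ⟨fun ⟨G₀, G, S₀, S, B, hS₀, hS, hB, hA⟩ => ⟨⟨G₀, G, S₀, S, B, hS₀, hS, hB, hA⟩⟩,
    fun ⟨f⟩ => ⟨f.G₀, f.G, f.S₀, f.S, f.B, f.S₀_mem, f.S_mem, f.B_mem, f.apply_eq⟩⟩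

namespace Factorization

noncomputable def zero : Factorization C D N 0 where
  G₀ := F
  G := E
  S₀ := 0
  S _ := 0
  B := 0
  S₀_mem := D.zero_mem F
  S_mem i := (C i).zero_mem (E i)
  B_mem := N.zero_mem E F
  apply_eq _ := by simp

noncomputable def smul (c : ℝ) (f : Factorization C D N A) : Factorization C D N (c • A) where
  G₀ := f.G₀
  G := f.G
  S₀ := f.S₀
  S := f.S
  B := c • f.B
  S₀_mem := f.S₀_mem
  S_mem := f.S_mem
  B_mem := N.smul_mem _ _ c _ f.B_mem
  apply_eq x := by simp [f.apply_eq x]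

noncomputable def add (f₁ : Factorization C D N A₁) (f₂ : Factorization C D N A₂) :
    Factorization C D N (A₁ + A₂) where
  G₀ := ⟨f₁.G₀.carrier × f₂.G₀.carrier⟩
  G i := ⟨(f₁.G i).carrier × (f₂.G i).carrier⟩
  S₀ := f₁.S₀.comp (.fst ℝ _ _) + f₂.S₀.comp (.snd ℝ _ _)
  S i := (ContinuousLinearMap.inl ℝ _ _).comp (f₁.S i) +
    (ContinuousLinearMap.inr ℝ _ _).comp (f₂.S i)
  B := (ContinuousLinearMap.inl ℝ _ _).compContinuousMultilinearMap
      (f₁.B.compContinuousLinearMap fun _ => .fst ℝ _ _) +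
    (ContinuousLinearMap.inr ℝ _ _).compContinuousMultilinearMap
      (f₂.B.compContinuousLinearMap fun _ => .snd ℝ _ _)
  S₀_mem := D.add_mem _ _ (D.comp_surj _ _ _ f₁.S₀_mem _ Prod.fst_surjective)
    _ (D.comp_surj _ _ _ f₂.S₀_mem _ Prod.snd_surjective)
  S_mem i := (C i).add_mem _ _ ((C i).comp_inj _ _ _ (f₁.S_mem i) _ (Prod.mk_left_injective 0))
    _ ((C i).comp_inj _ _ _ (f₂.S_mem i) _ (Prod.mk_right_injective 0))
  B_mem := N.add_mem _ _
    _ (N.comp_mem _ _ _ f₁.B_mem _ _ _ (fun _ => Prod.fst_surjective) _ (Prod.mk_left_injective 0))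
    _ (N.comp_mem _ _ _ f₂.B_mem _ _ _ (fun _ => Prod.snd_surjective) _ (Prod.mk_right_injective 0))
  apply_eq x := by simp [f₁.apply_eq x, f₂.apply_eq x]

noncomputable def transport (f : Factorization C D N A) {G₀' : BanachSp.{u}}
    {G' : Fin m → BanachSp.{u}} (e₀ : f.G₀.carrier ≃L[ℝ] G₀'.carrier)
    (e : ∀ i, (f.G i).carrier ≃L[ℝ] (G' i).carrier) :
    Factorization C D N A where
  G₀ := G₀'
  G := G'
  S₀ := f.S₀.comp (e₀.symm : G₀'.carrier →L[ℝ] f.G₀.carrier)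
  S i := (e i : (f.G i).carrier →L[ℝ] (G' i).carrier).comp (f.S i)
  B := (e₀ : f.G₀.carrier →L[ℝ] G₀'.carrier).compContinuousMultilinearMap
      (f.B.compContinuousLinearMap fun i => ((e i).symm : (G' i).carrier →L[ℝ] (f.G i).carrier))
  S₀_mem := D.comp_surj _ _ _ f.S₀_mem _ e₀.symm.surjective
  S_mem i := (C i).comp_inj _ _ _ (f.S_mem i) _ (e i).injective
  B_mem := N.comp_mem _ _ _ f.B_mem _ _ _ (fun i => (e i).symm.surjective) _ e₀.injective
  apply_eq x := by simp [f.apply_eq x]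

noncomputable def rescale (f : Factorization C D N A) {η : ℝ} (hη : η ≠ 0) :
    Factorization C D N A where
  G₀ := f.G₀
  G := f.G
  S₀ := η • f.S₀
  S i := η • f.S i
  B := (η ^ (m + 1))⁻¹ • f.B
  S₀_mem := D.smul_mem _ η _ f.S₀_mem
  S_mem i := (C i).smul_mem _ η _ (f.S_mem i)
  B_mem := N.smul_mem _ _ _ _ f.B_mem
  apply_eq x := by
    have : (η ^ (m + 1))⁻¹ * η ^ m * η = 1 := by field_simp; ring
    simp [f.apply_eq x, f.B.map_smul_univ, smul_smul, this]

end Factorization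

variable (E F C D N) in
noncomputable def factorableSubmodule :
    Submodule ℝ (ContinuousMultilinearMap ℝ (fun i => (E i).carrier) F.carrier) where
  carrier := FactorableOperators E F C D N
  zero_mem' := mem_factorableOperators_iff.mpr ⟨.zero⟩
  add_mem' h₁ h₂ := by
    obtain ⟨f₁⟩ := mem_factorableOperators_iff.mp h₁
    obtain ⟨f₂⟩ := mem_factorableOperators_iff.mp h₂
    exact mem_factorableOperators_iff.mpr ⟨f₁.add f₂⟩
  smul_mem' c _ h := by
    obtain ⟨f⟩ := mem_factorableOperators_iff.mp h
    exact mem_factorableOperators_iff.mpr ⟨f.smul c⟩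

theorem Factorization.exists_renormed (f : Factorization C D N A) {θ τ : ℝ} (hθ : 0 < θ)
    (hθ1 : θ ≤ 1) (hτ : 0 < τ) :
    ∃ g : Factorization C D N A, ‖g.S₀‖ ≤ 1 ∧ (∀ i, ‖g.S i‖ ≤ 1) ∧
      ‖g.B‖ ≤ max (τ * (‖f.B‖ * (2 * ∑ i, ‖f.S i‖ + 2) ^ m))
        (2 ^ m * ‖A‖ + ‖f.S₀.compContinuousMultilinearMap f.B‖ * m *
          (2 * ∑ i, ‖f.S i‖ + 2) ^ (m - 1) * (2 * θ)) := by
  set M := f.S₀.compContinuousMultilinearMap f.B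
  set R : ℝ := 2 * ∑ i, ‖f.S i‖ + 2
  choose H e he hdecomp using fun i => exists_codomain_renorming (f.G i) (f.S i) hθ
  obtain ⟨Y, e₀, he₀, he₀_le⟩ := exists_domain_renorming f.G₀ f.S₀ hτ
  refine ⟨f.transport e₀ e, he₀, he, ContinuousMultilinearMap.opNorm_le_of_forall_norm_le_one _
    (le_max_of_le_left (by positivity)) fun h hh => ?_⟩
  choose x y hxy hx hy using fun i => hdecomp i (h i) (hh i)
  set w := fun i => (e i).symm (h i)
  have hS : ∀ i, ‖f.S i (x i)‖ ≤ 2 * ∑ j, ‖f.S j‖ := fun i =>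
    ((f.S i).le_opNorm_of_le (hx i)).trans (by
      linarith [Finset.single_le_sum (fun j _ => norm_nonneg (f.S j)) (Finset.mem_univ i)])
  have hθy : ∀ i, ‖θ • y i‖ ≤ 2 * θ := fun i => by
    rw [norm_smul, Real.norm_of_nonneg hθ.le, mul_comm]
    exact mul_le_mul_of_nonneg_right (hy i) hθ.le
  have hSx : ‖fun i => f.S i (x i)‖ ≤ R :=
    (pi_norm_le_iff_of_nonneg (by positivity)).mpr fun i => by linarith [hS i]
  have hw : ‖w‖ ≤ R := (pi_norm_le_iff_of_nonneg (by positivity)).mpr fun i => by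
    simp only [w, hxy]
    linarith [norm_add_le (f.S i (x i)) (θ • y i), hS i, hθy i]
  have hwSx : ‖w - fun i => f.S i (x i)‖ ≤ 2 * θ :=
    (pi_norm_le_iff_of_nonneg (by positivity)).mpr fun i => by
      simpa [w, hxy] using hθy i
  change ‖e₀ (f.B w)‖ ≤ _
  refine (he₀_le _).trans (max_le_max ?_ ?_)
  · gcongr
    exact f.B.le_opNorm_mul_pow_of_le hw
  · calc ‖M w‖ ≤ ‖M fun i => f.S i (x i)‖ + ‖M w - M fun i => f.S i (x i)‖ :=
          norm_le_insert' _ _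
      _ ≤ 2 ^ m * ‖A‖ + ‖M‖ * m * R ^ (m - 1) * (2 * θ) := by
        gcongr
        · calc ‖M fun i => f.S i (x i)‖ = ‖A x‖ := by rw [f.apply_eq x]; rfl
            _ ≤ ‖A‖ * 2 ^ m := A.le_opNorm_mul_pow_of_le
                ((pi_norm_le_iff_of_nonneg zero_le_two).mpr hx)
            _ = 2 ^ m * ‖A‖ := mul_comm _ _
        · calc ‖M w - M fun i => f.S i (x i)‖
              ≤ ‖M‖ * m * max ‖w‖ ‖fun i => f.S i (x i)‖ ^ (m - 1) *
                  ‖w - fun i => f.S i (x i)‖ := by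
                simpa only [Fintype.card_fin] using M.norm_image_sub_le _ _
            _ ≤ ‖M‖ * m * R ^ (m - 1) * (2 * θ) := by
                gcongr
                exact max_le hw hSx

theorem Factorization.exists_norm_le (f : Factorization C D N A) {δ : ℝ} (hδ : 0 < δ) :
    ∃ g : Factorization C D N A,
      ‖g.S₀‖ ≤ 1 ∧ (∀ i, ‖g.S i‖ ≤ 1) ∧ ‖g.B‖ ≤ 2 ^ m * ‖A‖ + δ := by
  set M := f.S₀.compContinuousMultilinearMap f.B
  set R : ℝ := 2 * ∑ i, ‖f.S i‖ + 2
  obtain ⟨θ, hθ, hθM⟩ := exists_pos_mul_lt (half_pos hδ) (‖M‖ * m * R ^ (m - 1) * 2)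
  obtain ⟨τ, hτ, hτB⟩ := exists_pos_mul_lt (half_pos hδ) (‖f.B‖ * R ^ m)
  obtain ⟨g, hS₀, hS, hB⟩ := f.exists_renormed (lt_min hθ one_pos) (min_le_right θ 1) hτ
  have hA : 0 ≤ 2 ^ m * ‖A‖ := by positivity
  have hθ' : ‖M‖ * m * R ^ (m - 1) * (2 * min θ 1) ≤ ‖M‖ * m * R ^ (m - 1) * 2 * θ := by
    rw [← mul_assoc]
    gcongr
    exact min_le_left _ _
  refine ⟨g, hS₀, hS, hB.trans (max_le ?_ ?_)⟩ <;>
    linarith [mul_comm τ (‖f.B‖ * R ^ m)]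

theorem exists_factorization_norm_le (hA : A ∈ FactorableOperators E F C D N) {η δ : ℝ}
    (hη : 0 < η) (hδ : 0 < δ) :
    ∃ f : Factorization C D N A,
      ‖f.S₀‖ ≤ η ∧ (∀ i, ‖f.S i‖ ≤ η) ∧ ‖f.B‖ * η ^ (m + 1) ≤ 2 ^ m * ‖A‖ + δ := by
  obtain ⟨f⟩ := mem_factorableOperators_iff.mp hA
  obtain ⟨g, hS₀, hS, hB⟩ := f.exists_norm_le hδ
  have hη' : η ^ (m + 1) ≠ 0 := pow_ne_zero _ hη.ne'
  refine ⟨g.rescale hη.ne', ?_, fun i => ?_, ?_⟩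
  · change ‖η • g.S₀‖ ≤ η
    rw [norm_smul, Real.norm_of_nonneg hη.le]
    exact mul_le_of_le_one_right hη.le hS₀
  · change ‖η • g.S i‖ ≤ η
    rw [norm_smul, Real.norm_of_nonneg hη.le]
    exact mul_le_of_le_one_right hη.le (hS i)
  · change ‖(η ^ (m + 1))⁻¹ • g.B‖ * η ^ (m + 1) ≤ _
    rwa [norm_smul, norm_inv, Real.norm_of_nonneg (by positivity), mul_comm, ← mul_assoc,
      mul_inv_cancel₀ hη', one_mul]

theorem mem_factorableOperators_of_hasSum
    {Aₙ : ℕ → ContinuousMultilinearMap ℝ (fun i => (E i).carrier) F.carrier}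
    {A : ContinuousMultilinearMap ℝ (fun i => (E i).carrier) F.carrier}
    (f : ∀ n, Factorization C D N (Aₙ n)) (hS₀ : Summable fun n => ‖(f n).S₀‖)
    (hS : ∀ i, Summable fun n => ‖(f n).S i‖) (hB : Summable fun n => ‖(f n).B‖)
    (hA : HasSum Aₙ A) : A ∈ FactorableOperators E F C D N := by
  let W₀ n := (f n).G₀.carrier
  let W i n := ((f n).G i).carrier
  let X i : BanachSp.{u} := ⟨lp (W i) ∞⟩
  let Y : BanachSp.{u} := ⟨lp W₀ ∞⟩
  have hS₀' := lp.summable_comp_evalCLM hS₀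
  refine ⟨Y, X, ∑' n, (f n).S₀.comp (lp.evalCLM ℝ W₀ ∞ n),
    fun i => ∑' n, (lp.singleContinuousLinearMap ℝ (W i) ∞ n).comp ((f n).S i),
    ∑' n, (lp.singleContinuousLinearMap ℝ W₀ ∞ n).compContinuousMultilinearMap
      ((f n).B.compContinuousLinearMap fun i => lp.evalCLM ℝ (W i) ∞ n),
    ?_, fun i => ?_, ?_, fun x => ?_⟩
  · exact tsum_mem_of_isClosed (D.isClosed Y) (D.zero_mem Y) (D.add_mem Y) fun n =>
      D.comp_surj _ _ _ (f n).S₀_mem _ (lp.evalCLM_surjective n)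
  · exact tsum_mem_of_isClosed ((C i).isClosed _) ((C i).zero_mem _) ((C i).add_mem _) fun n =>
      (C i).comp_inj _ _ _ ((f n).S_mem i) _ (lp.singleContinuousLinearMap_injective n)
  · exact tsum_mem_of_isClosed (N.isClosed X Y) (N.zero_mem X Y) (N.add_mem X Y) fun n =>
      N.comp_mem _ _ _ (f n).B_mem _ _ _ (fun i => lp.evalCLM_surjective n) _
        (lp.singleContinuousLinearMap_injective n)
  · calc A x = ∑' n, Aₙ n x := (hA.mapL (ContinuousMultilinearMap.apply ℝ _ _ x)).tsum_eq.symm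
      _ = ∑' n, (f n).S₀ ((f n).B fun i => (f n).S i (x i)) :=
        tsum_congr fun n => (f n).apply_eq x
      _ = _ := by
        rw [ContinuousLinearMap.tsum_apply hS₀']
        refine tsum_congr fun n => congrArg (f n).S₀ ?_
        exact ((lp.tsum_single_compContinuousMultilinearMap_apply hB _ n).trans
          (congrArg (f n).B (funext fun i => lp.tsum_single_comp_apply (hS i) (x i) n))).symm

variable (E F C D N) in
theorem isClosed_factorableOperators :
    IsClosed (FactorableOperators E F C D N) := by
  refine isClosed_of_closure_subset fun A hA => ?_
  set r : ℕ → ℝ := fun n => (1 / 2 : ℝ) ^ n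
  have hr : Summable r := summable_geometric_two
  -- the exponent `m + 2` absorbs the factor `r n ^ (m + 1)` lost by rescaling with `η = r n`
  obtain ⟨v, hv_tendsto, hv_mem, -, hv⟩ :=
    controlled_sum_of_mem_closure (s := (factorableSubmodule E F C D N).toAddSubgroup) hA
      (b := fun n => r n ^ (m + 2)) fun n => by positivity
  have hv_sum : HasSum v A := by
    refine (hasSum_iff_tendsto_nat_of_summable_norm ?_).mpr
      ((tendsto_add_atTop_iff_nat 1).mp hv_tendsto)
    refine .of_norm_bounded_eventually_nat hr ?_
    filter_upwards [eventually_gt_atTop 0] with n hn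
    rw [norm_norm]
    exact (hv n hn).le.trans (pow_le_of_le_one (by positivity)
      (pow_le_one₀ (by norm_num) (by norm_num)) (by omega))
  choose f hf₀ hfS hfB using fun n =>
    exists_factorization_norm_le (hv_mem n) (η := r n) (δ := r n ^ (m + 2))
      (by positivity) (by positivity)
  refine mem_factorableOperators_of_hasSum f (.of_nonneg_of_le (fun _ => norm_nonneg _) hf₀ hr)
    (fun i => .of_nonneg_of_le (fun _ => norm_nonneg _) (fun n => hfS n i) hr) ?_ hv_sum
  refine .of_norm_bounded_eventually_nat (hr.mul_left (2 ^ m + 1)) ?_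
  filter_upwards [eventually_gt_atTop 0] with n hn
  rw [norm_norm]
  refine le_of_mul_le_mul_right ((hfB n).trans ?_) (pow_pos (by positivity : 0 < r n) (m + 1))
  calc 2 ^ m * ‖v n‖ + r n ^ (m + 2) ≤ 2 ^ m * r n ^ (m + 2) + r n ^ (m + 2) := by
        gcongr
        exact (hv n hn).le
    _ = (2 ^ m + 1) * r n * r n ^ (m + 1) := by ring

end

/-- `D(F) ∘ N ∘ (C(E₁),…,C(E_m))` is a closed linear subspace of `L(E₁,…,E_m;F)`. -/
theorem stmt18 {m : ℕ} (E : Fin m → BanachSp.{u}) (F : BanachSp.{u})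
    (C : ∀ i, InjClass.{u} (E i).carrier) (D : SurjClass.{u} F.carrier)
    (N : MSemiIdeal.{u} m) :
    IsClosed (FactorableOperators E F C D N) ∧
      (0 : ContinuousMultilinearMap ℝ (fun i => (E i).carrier) F.carrier) ∈
        FactorableOperators E F C D N ∧
      (∀ A₁ ∈ FactorableOperators E F C D N, ∀ A₂ ∈ FactorableOperators E F C D N,
        A₁ + A₂ ∈ FactorableOperators E F C D N) ∧
      (∀ (c : ℝ), ∀ A ∈ FactorableOperators E F C D N,
        c • A ∈ FactorableOperators E F C D N) :=
  ⟨isClosed_factorableOperators E F C D N, (factorableSubmodule E F C D N).zero_mem,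
    fun _ h₁ _ h₂ => (factorableSubmodule E F C D N).add_mem h₁ h₂,
    fun c _ h => (factorableSubmodule E F C D N).smul_mem c h⟩
end
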